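/- arXiv:2012.14986 — 6 statements merged into one kernel-verified Lean document; each statement's English description precedes it below -/
import Mathlib

section
/- Let η = (η_1,…,η_n) be integers with η_1 ≥ … ≥ η_n ≥ 0, let δ := (n−1, n−2, …, 1, 0), and for μ ∈ ℕ^n let a_μ := det(x_i^{μ_j})_{1≤i,j≤n} ∈ ℤ[x_1,…,x_n]. Let 𝒵_η be the set of all GT n-parallelograms z framed by P/Q with d(z;k,p) ≥ −(η_k − η_{k+1}) for every k ∈ {1,…,n−1} and p ∈ {0,…,m−1} (the η-ballot-admissible parallelograms), and for z ∈ 𝒵_η write c(z) := (#_1(z),…,#_n(z)). Then, in ℤ[x_1,…,x_n], a_{η+δ} · s_{P/Q}(x_1,…,x_n) = Σ_{z∈𝒵_η} a_{η+c(z)+δ}. -/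
open Finset
open scoped Classical

def IsGT (m n : ℕ) (P Q : ℕ → ℤ) (g : ℕ → ℕ → ℤ) : Prop :=
  (∀ k < m, g 0 k = Q (k + 1)) ∧
  (∀ k < m, g n k = P (k + 1)) ∧
  (∀ i < n, ∀ k < m, g i k ≤ g (i + 1) k) ∧
  (∀ i < n, ∀ k, k + 1 < m → g (i + 1) (k + 1) ≤ g i k) ∧
  (∀ i k, n < i ∨ m ≤ k → g i k = 0)

def ShapeHyps (m n : ℕ) (P Q : ℕ → ℤ) : Prop :=
  2 ≤ n ∧ n ≤ m ∧
  (∀ r, 1 ≤ r → r < m → P (r + 1) ≤ P r) ∧ 0 ≤ P m ∧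
  (∀ r, 1 ≤ r → r < m → Q (r + 1) ≤ Q r) ∧ 0 ≤ Q m ∧
  (∀ r, 1 ≤ r → r ≤ m → Q r ≤ P r) ∧
  (∀ c : ℤ, ((Finset.Icc 1 m).filter (fun r => Q r < c ∧ c ≤ P r)).card ≤ n)
/-- The finite set of cells of the skew shape `P/Q`: pairs `(r,c)` with
`1 ≤ r ≤ m` and `Q_r < c ≤ P_r`. -/
noncomputable def cells (m : ℕ) (P Q : ℕ → ℤ) : Finset (ℕ × ℤ) :=
  (Finset.Icc 1 m ×ˢ Finset.Icc 1 (P 1)).filter fun x => Q x.1 < x.2 ∧ x.2 ≤ P x.1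

/-- A semistandard `n`-tableau of skew shape `P/Q`: entries in `{1,…,n}`, rows
weakly increasing, columns strictly increasing; values outside the cells of the
shape are normalized to `0`. -/
def IsSSYT (m n : ℕ) (P Q : ℕ → ℤ) (T : ℕ × ℤ → ℕ) : Prop :=
  (∀ x ∈ cells m P Q, 1 ≤ T x ∧ T x ≤ n) ∧
  (∀ (r : ℕ) (c : ℤ), (r, c) ∈ cells m P Q → (r, c + 1) ∈ cells m P Q →
    T (r, c) ≤ T (r, c + 1)) ∧
  (∀ (r : ℕ) (c : ℤ), (r, c) ∈ cells m P Q → (r + 1, c) ∈ cells m P Q →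
    T (r, c) < T (r + 1, c)) ∧
  (∀ x, x ∉ cells m P Q → T x = 0)

/-- `#_i(T)`: the number of cells of `T` with entry `i`. -/
noncomputable def entryCount (m : ℕ) (P Q : ℕ → ℤ) (T : ℕ × ℤ → ℕ) (i : ℕ) : ℕ :=
  ((cells m P Q).filter fun x => T x = i).card

/-- The skew Schur polynomial `s_{P/Q}(x_1,…,x_n)`, with the variable `x_{i+1}`
encoded as `MvPolynomial.X (i : Fin n)`. -/
noncomputable def skewSchur (m n : ℕ) (P Q : ℕ → ℤ) : MvPolynomial (Fin n) ℤ :=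
  ∑ᶠ T ∈ {T : ℕ × ℤ → ℕ | IsSSYT m n P Q T},
    ∏ i : Fin n, MvPolynomial.X i ^ entryCount m P Q T ((i : ℕ) + 1)

/-- `#_i(g)` for a GT parallelogram `g`. -/
def cnt (m i : ℕ) (g : ℕ → ℕ → ℤ) : ℤ :=
  (∑ k ∈ Finset.range m, g i k) - (∑ k ∈ Finset.range m, g (i - 1) k)

/-- The statistic `d(z;k,p)` (here `g k q` is the entry `g_{k,k-q}`). -/
def dstat (z : ℕ → ℕ → ℤ) (k p : ℕ) : ℤ :=
  (∑ q ∈ Finset.range p, (2 * z k q - z (k - 1) q - z (k + 1) q)) + z k p - z (k + 1) p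

/-- The alternant `a_μ = det (x_i^{μ_j})`. -/
noncomputable def alt (n : ℕ) (μ : Fin n → ℕ) : MvPolynomial (Fin n) ℤ :=
  Matrix.det (Matrix.of fun i j : Fin n => MvPolynomial.X i ^ μ j)

/-!
Semistandard tableaux of shape `P/Q` correspond to GT parallelograms (entry `(i, q)` records
where the entries `≤ i` end in row `q + 1`), so `s_{P/Q} = ∑_z x^{c(z)}`. The Bender–Knuth
involutions show that this sum is symmetric; antisymmetrizing `x^γ s_{P/Q}` then gives
`a_γ s_{P/Q} = ∑_z a_{γ + c(z)}` for every `γ`.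

For `γ = η + δ` the terms of the non-admissible `z` cancel in pairs. Take the first violating
position `p` and the last violating row `k` there, and reflect row `k` inside its interlacing
bounds from position `p` on, using a shifted reflection point at `p`. The result is again a
non-admissible parallelogram with the same first violation, and `γ + c(z)` changes by exchanging
its entries `k` and `k + 1`, so the two alternants are opposite.
-/

open MvPolynomial

section Antisymmetrize

variable {ι R : Type*} [Fintype ι] [DecidableEq ι] [CommRing R]

noncomputable def antisymmetrize (f : MvPolynomial ι R) : MvPolynomial ι R :=
  ∑ σ : Equiv.Perm ι, (Equiv.Perm.sign σ : ℤ) • rename σ f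

lemma antisymmetrize_sum {α : Type*} (s : Finset α) (f : α → MvPolynomial ι R) :
    antisymmetrize (∑ a ∈ s, f a) = ∑ a ∈ s, antisymmetrize (f a) := by
  simp only [antisymmetrize, map_sum, Finset.smul_sum]
  exact Finset.sum_comm

lemma antisymmetrize_mul_of_isSymmetric {f F : MvPolynomial ι R} (hF : F.IsSymmetric) :
    antisymmetrize (f * F) = antisymmetrize f * F := by
  simp only [antisymmetrize, map_mul, hF _, Finset.sum_mul, smul_mul_assoc]

end Antisymmetrize

lemma alt_eq_antisymmetrize {n : ℕ} (μ : Fin n → ℕ) :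
    alt n μ = antisymmetrize (∏ j, X j ^ μ j) := by
  simp only [alt, antisymmetrize, Matrix.det_apply', map_prod, map_pow, rename_X,
    Matrix.of_apply, zsmul_eq_mul]

lemma alt_mul_sum_eq_sum_alt {n : ℕ} {α : Type*} (s : Finset α) (c : α → Fin n → ℕ)
    (γ : Fin n → ℕ) (hF : (∑ a ∈ s, ∏ j, X j ^ c a j : MvPolynomial (Fin n) ℤ).IsSymmetric) :
    alt n γ * ∑ a ∈ s, ∏ j, X j ^ c a j = ∑ a ∈ s, alt n (γ + c a) := by
  simp only [alt_eq_antisymmetrize, ← antisymmetrize_mul_of_isSymmetric hF, Finset.mul_sum,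
    antisymmetrize_sum, ← Finset.prod_mul_distrib, ← pow_add, Pi.add_apply]

lemma alt_comp_swap {n : ℕ} (μ : Fin n → ℕ) {a b : Fin n} (hab : a ≠ b) :
    alt n (μ ∘ Equiv.swap a b) = -alt n μ := by
  have : Matrix.of (fun i j => (X i : MvPolynomial (Fin n) ℤ) ^ (μ ∘ Equiv.swap a b) j) =
      (Matrix.of fun i j => X i ^ μ j).submatrix id (Equiv.swap a b) := rfl
  rw [alt, this, Matrix.det_permute', Equiv.Perm.sign_swap hab, alt]
  simp

lemma isSymmetric_of_rename_swap {n : ℕ} {R : Type*} [CommSemiring R] {F : MvPolynomial (Fin n) R}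
    (h : ∀ a b : Fin n, (b : ℕ) = a + 1 → rename (Equiv.swap a b) F = F) : F.IsSymmetric := by
  cases n with
  | zero => intro σ; rw [Subsingleton.elim σ (Equiv.refl _), Equiv.coe_refl, rename_id_apply]
  | succ n =>
    intro σ
    have hσ : σ ∈ Submonoid.closure (Set.range fun i : Fin n => Equiv.swap i.castSucc i.succ) := by
      rw [Equiv.Perm.mclosure_swap_castSucc_succ]; trivial
    induction hσ using Submonoid.closure_induction with
    | mem τ hτ => obtain ⟨i, rfl⟩ := hτ; exact h _ _ (by simp)
    | one => exact rename_id_apply F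
    | mul τ τ' _ _ hτ hτ' => rw [Equiv.Perm.coe_mul, ← rename_rename, hτ', hτ]

lemma rename_sum_prod_X_pow_eq_self {n : ℕ} {R α : Type*} [CommSemiring R] (s : Finset α)
    (c : α → Fin n → ℕ) (e : Equiv.Perm (Fin n)) (f : α → α) (hf : ∀ a ∈ s, f a ∈ s)
    (hff : ∀ a ∈ s, f (f a) = a) (hc : ∀ a ∈ s, ∀ j, c (f a) (e j) = c a j) :
    rename e (∑ a ∈ s, ∏ j, X j ^ c a j : MvPolynomial (Fin n) R) =
      ∑ a ∈ s, ∏ j, X j ^ c a j := by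
  simp only [map_sum, map_prod, map_pow, rename_X]
  refine Finset.sum_nbij' f f hf hf hff hff fun a ha => ?_
  exact Fintype.prod_equiv e _ _ fun j => by rw [hc a ha]

section Shape

variable {m n : ℕ} {P Q : ℕ → ℤ}

lemma ShapeHyps.antitoneOn_P (h : ShapeHyps m n P Q) : AntitoneOn P (Set.Icc 1 m) :=
  antitoneOn_of_succ_le Set.ordConnected_Icc fun r _ hr hr' =>
    h.2.2.1 r hr.1 (by simp only [Order.succ_eq_add_one, Set.mem_Icc] at hr'; omega)

lemma ShapeHyps.antitoneOn_Q (h : ShapeHyps m n P Q) : AntitoneOn Q (Set.Icc 1 m) :=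
  antitoneOn_of_succ_le Set.ordConnected_Icc fun r _ hr hr' =>
    h.2.2.2.2.1 r hr.1 (by simp only [Order.succ_eq_add_one, Set.mem_Icc] at hr'; omega)

lemma ShapeHyps.Q_nonneg (h : ShapeHyps m n P Q) {r : ℕ} (hr : r ∈ Set.Icc 1 m) : 0 ≤ Q r :=
  h.2.2.2.2.2.1.trans (h.antitoneOn_Q hr ⟨hr.1.trans hr.2, le_rfl⟩ hr.2)

lemma ShapeHyps.Q_le_P (h : ShapeHyps m n P Q) {r : ℕ} (hr : r ∈ Set.Icc 1 m) : Q r ≤ P r :=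
  h.2.2.2.2.2.2.1 r hr.1 hr.2

lemma mem_cells_succ (h : ShapeHyps m n P Q) {q : ℕ} {c : ℤ} :
    (q + 1, c) ∈ cells m P Q ↔ q < m ∧ Q (q + 1) < c ∧ c ≤ P (q + 1) := by
  simp only [cells, Finset.mem_filter, Finset.mem_product, Finset.mem_Icc]
  constructor
  · rintro ⟨⟨⟨-, hq⟩, -⟩, hc⟩
    exact ⟨by omega, hc⟩
  · rintro ⟨hq, hQc, hcP⟩
    have := h.Q_nonneg (r := q + 1) ⟨by omega, by omega⟩
    have := h.antitoneOn_P (a := 1) (b := q + 1) ⟨le_rfl, by omega⟩ ⟨by omega, by omega⟩ (by omega)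
    exact ⟨⟨⟨by omega, by omega⟩, by omega, by omega⟩, hQc, hcP⟩

end Shape

lemma mem_iff_le_add_card_of_downClosed {a : ℤ} {S : Finset ℤ} (hS : ∀ x ∈ S, a < x)
    (dc : ∀ x ∈ S, ∀ y, a < y → y ≤ x → y ∈ S) {x : ℤ} (hx : a < x) :
    x ∈ S ↔ x ≤ a + #S := by
  constructor
  · intro hxS
    have := Finset.card_le_card fun y hy =>
      dc x hxS y (Finset.mem_Ioc.mp hy).1 (Finset.mem_Ioc.mp hy).2
    rw [Int.card_Ioc] at this
    omega
  · intro hle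
    by_contra hxS
    have : S ⊆ Finset.Ioo a x := fun y hy =>
      Finset.mem_Ioo.mpr ⟨hS y hy, lt_of_not_ge fun hxy => hxS (dc y hy x hx hxy)⟩
    have := Finset.card_le_card this
    rw [Int.card_Ioo] at this
    omega

lemma mem_iff_lt_card_of_downClosed {S : Finset ℕ} (dc : ∀ x ∈ S, ∀ y ≤ x, y ∈ S) {x : ℕ} :
    x ∈ S ↔ x < #S := by
  constructor
  · intro hxS
    have := Finset.card_le_card fun y hy => dc x hxS y (Nat.lt_succ_iff.mp (Finset.mem_range.mp hy))
    rw [Finset.card_range] at this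
    omega
  · intro hlt
    by_contra hxS
    have : S ⊆ Finset.range x := fun y hy =>
      Finset.mem_range.mpr (lt_of_not_ge fun hxy => hxS (dc y hy x hxy))
    have := Finset.card_le_card this
    rw [Finset.card_range] at this
    omega

section GT

variable {m n : ℕ} {P Q : ℕ → ℤ} {z : ℕ → ℕ → ℤ}

lemma IsGT.monotoneOn (hz : IsGT m n P Q z) {q : ℕ} (hq : q < m) :
    MonotoneOn (fun i => z i q) (Set.Iic n) :=
  monotoneOn_of_le_succ Set.ordConnected_Iic fun i _ _ hi =>
    hz.2.2.1 i (by simp only [Order.succ_eq_add_one, Set.mem_Iic] at hi; omega) q hq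

lemma IsGT.mono (hz : IsGT m n P Q z) {i i' q : ℕ} (hii' : i ≤ i') (hi' : i' ≤ n) (hq : q < m) :
    z i q ≤ z i' q :=
  hz.monotoneOn hq (Set.mem_Iic.mpr (hii'.trans hi')) (Set.mem_Iic.mpr hi') hii'

lemma IsGT.Q_le (hz : IsGT m n P Q z) {i q : ℕ} (hi : i ≤ n) (hq : q < m) :
    Q (q + 1) ≤ z i q :=
  hz.1 q hq ▸ hz.mono (Nat.zero_le i) hi hq

lemma IsGT.le_P (hz : IsGT m n P Q z) {i q : ℕ} (hi : i ≤ n) (hq : q < m) :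
    z i q ≤ P (q + 1) :=
  hz.2.1 q hq ▸ hz.mono hi le_rfl hq

lemma IsGT.cnt_nonneg (hz : IsGT m n P Q z) {i : ℕ} (hi : i ∈ Set.Icc 1 n) : 0 ≤ cnt m i z := by
  rw [cnt, sub_nonneg]
  exact Finset.sum_le_sum fun q hq =>
    hz.mono (Nat.sub_le i 1) hi.2 (Finset.mem_range.mp hq)

lemma finite_setOf_isGT : {z | IsGT m n P Q z}.Finite := by
  let restrict : (ℕ → ℕ → ℤ) → Fin (n + 1) → Fin m → ℤ := fun z i q => z i q
  refine Set.Finite.of_finite_image (f := restrict) ?_ ?_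
  · refine (Set.Finite.pi fun _ : Fin (n + 1) => Set.Finite.pi fun q : Fin m =>
      Set.finite_Icc (Q (q + 1)) (P (q + 1))).subset ?_
    rintro _ ⟨z, hz, rfl⟩
    simp only [Set.mem_pi, Set.mem_univ, Set.mem_Icc, true_implies]
    exact fun i q => ⟨hz.Q_le (Nat.lt_succ_iff.mp i.2) q.2, hz.le_P (Nat.lt_succ_iff.mp i.2) q.2⟩
  · intro z hz z' hz' he
    funext i q
    by_cases hiq : i ≤ n ∧ q < m
    · exact congrFun₂ he ⟨i, Nat.lt_succ_iff.mpr hiq.1⟩ ⟨q, hiq.2⟩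
    · rw [hz.2.2.2.2 i q (by omega), (show IsGT m n P Q z' from hz').2.2.2.2 i q (by omega)]

end GT

/-- Entry `(i, q)` is the column of the last entry `≤ i` in row `q + 1` of `T`. -/
noncomputable def gtOf (m n : ℕ) (P Q : ℕ → ℤ) (T : ℕ × ℤ → ℕ) : ℕ → ℕ → ℤ :=
  fun i q => if i ≤ n ∧ q < m then
    Q (q + 1) + #{c ∈ Finset.Ioc (Q (q + 1)) (P (q + 1)) | T (q + 1, c) ≤ i} else 0

noncomputable def tabOf (m n : ℕ) (P Q : ℕ → ℤ) (z : ℕ → ℕ → ℤ) : ℕ × ℤ → ℕ :=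
  fun x => if x ∈ cells m P Q then #{i ∈ Finset.range (n + 1) | z i (x.1 - 1) < x.2} else 0

section Bijection

variable {m n : ℕ} {P Q : ℕ → ℤ} {T : ℕ × ℤ → ℕ} {z : ℕ → ℕ → ℤ}

lemma exists_succ_of_mem_cells {r : ℕ} {c : ℤ} (hx : (r, c) ∈ cells m P Q) : ∃ q, r = q + 1 := by
  simp only [cells, Finset.mem_filter, Finset.mem_product, Finset.mem_Icc] at hx
  exact Nat.exists_eq_add_of_le' hx.1.1.1

lemma IsSSYT.row_mono (h : ShapeHyps m n P Q) (hT : IsSSYT m n P Q T) {q : ℕ} {c c' : ℤ}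
    (hc : (q + 1, c) ∈ cells m P Q) (hc' : (q + 1, c') ∈ cells m P Q) (hcc' : c ≤ c') :
    T (q + 1, c) ≤ T (q + 1, c') := by
  rw [mem_cells_succ h] at hc hc'
  induction c', hcc' using Int.leInduction with
  | base => exact le_rfl
  | succ d hcd ih =>
    have hd : (q + 1, d) ∈ cells m P Q := (mem_cells_succ h).mpr (by omega)
    exact (ih (by omega)).trans (hT.2.1 _ d hd ((mem_cells_succ h).mpr hc'))

lemma gtOf_apply {i q : ℕ} (hi : i ≤ n) (hq : q < m) :
    gtOf m n P Q T i q = Q (q + 1) + #{c ∈ Finset.Ioc (Q (q + 1)) (P (q + 1)) | T (q + 1, c) ≤ i} :=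
  if_pos ⟨hi, hq⟩

lemma gtOf_le_P (h : ShapeHyps m n P Q) {i q : ℕ} (hi : i ≤ n) (hq : q < m) :
    gtOf m n P Q T i q ≤ P (q + 1) := by
  have := h.Q_le_P (r := q + 1) ⟨by omega, by omega⟩
  have := Finset.card_le_card (Finset.filter_subset (fun c => T (q + 1, c) ≤ i)
    (Finset.Ioc (Q (q + 1)) (P (q + 1))))
  rw [Int.card_Ioc] at this
  rw [gtOf_apply hi hq]
  omega

lemma le_gtOf_iff (h : ShapeHyps m n P Q) (hT : IsSSYT m n P Q T) {q i : ℕ} {c : ℤ}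
    (hc : (q + 1, c) ∈ cells m P Q) (hi : i ≤ n) :
    T (q + 1, c) ≤ i ↔ c ≤ gtOf m n P Q T i q := by
  have hcI := (mem_cells_succ h).mp hc
  rw [gtOf_apply hi hcI.1, ← mem_iff_le_add_card_of_downClosed _ _ hcI.2.1, Finset.mem_filter,
    Finset.mem_Ioc]
  · exact ⟨fun hTc => ⟨hcI.2, hTc⟩, fun hc => hc.2⟩
  · exact fun x hx => (Finset.mem_Ioc.mp (Finset.mem_filter.mp hx).1).1
  · intro x hx y hy hyx
    simp only [Finset.mem_filter, Finset.mem_Ioc] at hx ⊢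
    have hy' : (q + 1, y) ∈ cells m P Q := (mem_cells_succ h).mpr ⟨hcI.1, hy, by omega⟩
    have hx' : (q + 1, x) ∈ cells m P Q := (mem_cells_succ h).mpr ⟨hcI.1, hx.1⟩
    exact ⟨⟨hy, by omega⟩, (hT.row_mono h hy' hx' hyx).trans hx.2⟩

/-- Column strictness of `T` is what makes `gtOf T` interlace. -/
lemma gtOf_succ_succ_le (h : ShapeHyps m n P Q) (hT : IsSSYT m n P Q T) {i q : ℕ} (hi : i < n)
    (hq : q + 1 < m) : gtOf m n P Q T (i + 1) (q + 1) ≤ gtOf m n P Q T i q := by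
  set t := gtOf m n P Q T (i + 1) (q + 1)
  have hQt : Q (q + 1) ≤ gtOf m n P Q T i q := by
    rw [gtOf_apply hi.le (by omega)]; omega
  by_contra! hlt
  have hP : P (q + 1 + 1) ≤ P (q + 1) :=
    h.antitoneOn_P ⟨by omega, by omega⟩ ⟨by omega, by omega⟩ (by omega)
  have hQ : Q (q + 1 + 1) ≤ Q (q + 1) :=
    h.antitoneOn_Q ⟨by omega, by omega⟩ ⟨by omega, by omega⟩ (by omega)
  have htP : t ≤ P (q + 1 + 1) := gtOf_le_P h hi hq
  have hlow : (q + 1 + 1, t) ∈ cells m P Q := (mem_cells_succ h).mpr ⟨hq, by omega, htP⟩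
  have hup : (q + 1, t) ∈ cells m P Q := (mem_cells_succ h).mpr ⟨by omega, by omega, by omega⟩
  have hTlow : T (q + 1 + 1, t) ≤ i + 1 := (le_gtOf_iff h hT hlow hi).mpr le_rfl
  have hTup : T (q + 1, t) ≤ i := by
    have := hT.2.2.1 (q + 1) t hup hlow
    omega
  exact absurd ((le_gtOf_iff h hT hup hi.le).mp hTup) (not_le.mpr hlt)

lemma IsSSYT.isGT_gtOf (h : ShapeHyps m n P Q) (hT : IsSSYT m n P Q T) :
    IsGT m n P Q (gtOf m n P Q T) := by
  refine ⟨fun q hq => ?_, fun q hq => ?_, fun i hi q hq => ?_, fun i hi q hq =>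
    gtOf_succ_succ_le h hT hi hq, fun i q hiq => if_neg (by omega)⟩
  · rw [gtOf_apply (Nat.zero_le n) hq, Finset.filter_false_of_mem, Finset.card_empty]
    · simp
    · intro c hc
      have := hT.1 _ ((mem_cells_succ h).mpr ⟨hq, Finset.mem_Ioc.mp hc⟩)
      omega
  · rw [gtOf_apply le_rfl hq, Finset.filter_true_of_mem, Int.card_Ioc]
    · have := h.Q_le_P (r := q + 1) ⟨by omega, by omega⟩
      omega
    · exact fun c hc => (hT.1 _ ((mem_cells_succ h).mpr ⟨hq, Finset.mem_Ioc.mp hc⟩)).2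
  · rw [gtOf_apply hi.le hq, gtOf_apply hi hq, add_le_add_iff_left, Nat.cast_le]
    exact Finset.card_le_card (Finset.monotone_filter_right _ fun c hc => by omega)

lemma tabOf_le_iff (h : ShapeHyps m n P Q) (hz : IsGT m n P Q z) {q i : ℕ} {c : ℤ}
    (hc : (q + 1, c) ∈ cells m P Q) (hi : i ≤ n) :
    tabOf m n P Q z (q + 1, c) ≤ i ↔ c ≤ z i q := by
  have hq := ((mem_cells_succ h).mp hc).1
  have dc : ∀ x ∈ {j ∈ Finset.range (n + 1) | z j q < c}, ∀ y ≤ x,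
      y ∈ {j ∈ Finset.range (n + 1) | z j q < c} := by
    intro x hx y hyx
    simp only [Finset.mem_filter, Finset.mem_range] at hx ⊢
    exact ⟨by omega, (hz.mono hyx (by omega) hq).trans_lt hx.2⟩
  have hiS := (mem_iff_lt_card_of_downClosed dc (x := i)).not
  simp only [Finset.mem_filter, Finset.mem_range, not_and, not_lt] at hiS
  simp only [tabOf, if_pos hc, Nat.add_sub_cancel]
  rw [← hiS]
  exact ⟨fun H => H (by omega), fun H _ => H⟩

lemma IsGT.tabOf_mem_Icc (h : ShapeHyps m n P Q) (hz : IsGT m n P Q z) {q : ℕ} {c : ℤ}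
    (hc : (q + 1, c) ∈ cells m P Q) : tabOf m n P Q z (q + 1, c) ∈ Set.Icc 1 n := by
  obtain ⟨hq, hQc, hcP⟩ := (mem_cells_succ h).mp hc
  refine ⟨Nat.one_le_iff_ne_zero.mpr fun h0 => ?_,
    (tabOf_le_iff h hz hc le_rfl).mpr (hz.2.1 q hq ▸ hcP)⟩
  have := (tabOf_le_iff h hz hc (Nat.zero_le n)).mp h0.le
  rw [hz.1 q hq] at this
  omega

lemma IsGT.isSSYT_tabOf (h : ShapeHyps m n P Q) (hz : IsGT m n P Q z) :
    IsSSYT m n P Q (tabOf m n P Q z) := by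
  refine ⟨fun ⟨r, c⟩ hc => ?_, fun r c hc hc' => ?_, fun r c hc hc' => ?_, fun x hx => if_neg hx⟩
  · obtain ⟨q, rfl⟩ := exists_succ_of_mem_cells hc
    exact hz.tabOf_mem_Icc h hc
  · obtain ⟨q, rfl⟩ := exists_succ_of_mem_cells hc
    have hv := hz.tabOf_mem_Icc h hc'
    rw [tabOf_le_iff h hz hc hv.2]
    have := (tabOf_le_iff h hz hc' hv.2).mp le_rfl
    omega
  · obtain ⟨q, rfl⟩ := exists_succ_of_mem_cells hc
    have hq := ((mem_cells_succ h).mp hc').1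
    obtain ⟨hv1, hvn⟩ := hz.tabOf_mem_Icc h hc'
    have hcv := (tabOf_le_iff h hz hc' hvn).mp le_rfl
    generalize tabOf m n P Q z (q + 1 + 1, c) = v at hv1 hvn hcv ⊢
    have hstep : z (v - 1 + 1) (q + 1) ≤ z (v - 1) q := hz.2.2.2.1 (v - 1) (by omega) q hq
    rw [Nat.sub_add_cancel hv1] at hstep
    have := (tabOf_le_iff h hz hc (by omega : v - 1 ≤ n)).mpr (hcv.trans hstep)
    omega

lemma tabOf_gtOf (h : ShapeHyps m n P Q) (hT : IsSSYT m n P Q T) :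
    tabOf m n P Q (gtOf m n P Q T) = T := by
  funext ⟨r, c⟩
  by_cases hc : (r, c) ∈ cells m P Q
  · obtain ⟨q, rfl⟩ := exists_succ_of_mem_cells hc
    have hg := hT.isGT_gtOf h
    have key : ∀ i ≤ n, tabOf m n P Q (gtOf m n P Q T) (q + 1, c) ≤ i ↔ T (q + 1, c) ≤ i :=
      fun i hi => (tabOf_le_iff h hg hc hi).trans (le_gtOf_iff h hT hc hi).symm
    exact le_antisymm ((key _ (hT.1 _ hc).2).mpr le_rfl)
      ((key _ (hg.tabOf_mem_Icc h hc).2).mp le_rfl)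
  · rw [tabOf, if_neg hc, hT.2.2.2 _ hc]

lemma gtOf_tabOf (h : ShapeHyps m n P Q) (hz : IsGT m n P Q z) :
    gtOf m n P Q (tabOf m n P Q z) = z := by
  funext i q
  by_cases hiq : i ≤ n ∧ q < m
  · obtain ⟨hi, hq⟩ := hiq
    have hfilter : {c ∈ Finset.Ioc (Q (q + 1)) (P (q + 1)) | tabOf m n P Q z (q + 1, c) ≤ i} =
        Finset.Ioc (Q (q + 1)) (z i q) := by
      ext c
      simp only [Finset.mem_filter, Finset.mem_Ioc]
      constructor
      · rintro ⟨hc, hci⟩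
        exact ⟨hc.1, (tabOf_le_iff h hz ((mem_cells_succ h).mpr ⟨hq, hc⟩) hi).mp hci⟩
      · rintro ⟨hQc, hcz⟩
        have hcP := hcz.trans (hz.le_P hi hq)
        exact ⟨⟨hQc, hcP⟩, (tabOf_le_iff h hz ((mem_cells_succ h).mpr ⟨hq, hQc, hcP⟩) hi).mpr hcz⟩
    rw [gtOf_apply hi hq, hfilter, Int.card_Ioc]
    have := hz.Q_le hi hq
    omega
  · rw [gtOf, if_neg hiq, hz.2.2.2.2 i q (by omega)]

lemma card_filter_cells_eq_sum (h : ShapeHyps m n P Q) (i : ℕ) :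
    #{x ∈ cells m P Q | T x = i} =
      ∑ q ∈ Finset.range m, #{c ∈ Finset.Ioc (Q (q + 1)) (P (q + 1)) | T (q + 1, c) = i} := by
  rw [Finset.card_eq_sum_card_fiberwise (f := fun x => x.1 - 1) (t := Finset.range m)]
  · refine Finset.sum_congr rfl fun q hq => ?_
    refine Finset.card_nbij' Prod.snd (fun c => (q + 1, c)) ?_ ?_ ?_ ?_
    · rintro ⟨r, c⟩ hx
      simp only [Finset.mem_coe, Finset.mem_filter] at hx ⊢
      obtain ⟨⟨hc, hTc⟩, rfl⟩ := hx
      obtain ⟨q, rfl⟩ := exists_succ_of_mem_cells hc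
      rw [mem_cells_succ h] at hc
      exact ⟨Finset.mem_Ioc.mpr hc.2, hTc⟩
    · intro c hc
      simp only [Finset.mem_coe, Finset.mem_filter, Finset.mem_Ioc] at hc ⊢
      exact ⟨⟨(mem_cells_succ h).mpr ⟨Finset.mem_range.mp hq, hc.1⟩, hc.2⟩, rfl⟩
    · rintro ⟨r, c⟩ hx
      simp only [Finset.mem_coe, Finset.mem_filter] at hx
      obtain ⟨q, rfl⟩ := exists_succ_of_mem_cells hx.1.1
      simp only [← hx.2, Nat.add_sub_cancel]
    · exact fun _ _ => rfl
  · rintro ⟨r, c⟩ hx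
    simp only [Finset.mem_coe, Finset.mem_filter] at hx
    obtain ⟨q, rfl⟩ := exists_succ_of_mem_cells hx.1
    simpa using ((mem_cells_succ h).mp hx.1).1

lemma cnt_gtOf (h : ShapeHyps m n P Q) {i : ℕ} (hi : i ∈ Set.Icc 1 n) :
    cnt m i (gtOf m n P Q T) = entryCount m P Q T i := by
  obtain ⟨hi1, hin⟩ := hi
  rw [entryCount, card_filter_cells_eq_sum h, cnt, ← Finset.sum_sub_distrib, Nat.cast_sum]
  refine Finset.sum_congr rfl fun q hq => ?_
  have hsplit : #{c ∈ Finset.Ioc (Q (q + 1)) (P (q + 1)) | T (q + 1, c) ≤ i} =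
      #{c ∈ Finset.Ioc (Q (q + 1)) (P (q + 1)) | T (q + 1, c) ≤ i - 1} +
        #{c ∈ Finset.Ioc (Q (q + 1)) (P (q + 1)) | T (q + 1, c) = i} := by
    rw [← Finset.card_union_of_disjoint (Finset.disjoint_filter.mpr fun c _ h1 h2 => by omega),
      ← Finset.filter_or]
    exact congrArg _ (Finset.filter_congr fun c _ => by omega)
  rw [gtOf_apply hin (Finset.mem_range.mp hq), gtOf_apply (by omega) (Finset.mem_range.mp hq),
    hsplit]
  push_cast
  ring

lemma finite_setOf_isSSYT (h : ShapeHyps m n P Q) : {T | IsSSYT m n P Q T}.Finite :=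
  (finite_setOf_isGT.image (tabOf m n P Q)).subset fun T hT =>
    ⟨gtOf m n P Q T, IsSSYT.isGT_gtOf h hT, tabOf_gtOf h hT⟩

end Bijection

def content (m n : ℕ) (z : ℕ → ℕ → ℤ) : Fin n → ℕ := fun j => (cnt m (j + 1) z).toNat

lemma skewSchur_eq_sum_content {m n : ℕ} {P Q : ℕ → ℤ} (h : ShapeHyps m n P Q)
    {Z : Finset (ℕ → ℕ → ℤ)} (hZ : ∀ z, z ∈ Z ↔ IsGT m n P Q z) :
    skewSchur m n P Q = ∑ z ∈ Z, ∏ j, X j ^ content m n z j := by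
  rw [skewSchur, ← (finite_setOf_isSSYT h).coe_toFinset, finsum_mem_coe_finset]
  have mem : ∀ T, T ∈ (finite_setOf_isSSYT h).toFinset ↔ IsSSYT m n P Q T :=
    fun T => Set.Finite.mem_toFinset _
  refine Finset.sum_nbij' (gtOf m n P Q) (tabOf m n P Q) (fun T hT => ?_) (fun z hz => ?_)
    (fun T hT => tabOf_gtOf h ((mem T).mp hT)) (fun z hz => gtOf_tabOf h ((hZ z).mp hz))
    (fun T hT => ?_)
  · exact (hZ _).mpr (((mem T).mp hT).isGT_gtOf h)
  · exact (mem _).mpr (((hZ z).mp hz).isSSYT_tabOf h)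
  · refine Finset.prod_congr rfl fun j _ => ?_
    rw [content, cnt_gtOf h ⟨by omega, by omega⟩, Int.toNat_natCast]

/-- `lowerBound m z k q ≤ z k q ≤ upperBound z k q` are exactly the interlacing conditions
between entry `(k, q)` and the rows `k - 1` and `k + 1`. -/
def lowerBound (m : ℕ) (z : ℕ → ℕ → ℤ) (k q : ℕ) : ℤ :=
  if q + 1 < m then max (z (k - 1) q) (z (k + 1) (q + 1)) else z (k - 1) q

def upperBound (z : ℕ → ℕ → ℤ) (k q : ℕ) : ℤ :=
  if q = 0 then z (k + 1) 0 else min (z (k - 1) (q - 1)) (z (k + 1) q)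

def updateRow (m k : ℕ) (z : ℕ → ℕ → ℤ) (w : ℕ → ℤ) : ℕ → ℕ → ℤ :=
  fun i q => if i = k ∧ q < m then w q else z i q

section Interlacing

variable {m n : ℕ} {P Q : ℕ → ℤ} {z : ℕ → ℕ → ℤ} {k : ℕ}

lemma le_lowerBound (z : ℕ → ℕ → ℤ) (k q : ℕ) : z (k - 1) q ≤ lowerBound m z k q := by
  unfold lowerBound; split_ifs <;> simp

lemma le_lowerBound_of_lt {q : ℕ} (hq : q + 1 < m) : z (k + 1) (q + 1) ≤ lowerBound m z k q := by
  rw [lowerBound, if_pos hq]; exact le_max_right _ _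

lemma upperBound_le (z : ℕ → ℕ → ℤ) (k q : ℕ) : upperBound z k q ≤ z (k + 1) q := by
  unfold upperBound; split_ifs with hq <;> simp [hq]

lemma upperBound_le_of_pos {q : ℕ} (hq : q ≠ 0) : upperBound z k q ≤ z (k - 1) (q - 1) := by
  rw [upperBound, if_neg hq]; exact min_le_left _ _

lemma IsGT.lowerBound_le (hz : IsGT m n P Q z) (hkn : k < n) {q : ℕ} (hq : q < m) :
    lowerBound m z k q ≤ z k q := by
  have hvert : z (k - 1) q ≤ z k q := hz.mono (Nat.sub_le k 1) hkn.le hq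
  unfold lowerBound
  split_ifs with hq1
  · exact max_le hvert (hz.2.2.2.1 k hkn q hq1)
  · exact hvert

lemma IsGT.le_upperBound (hz : IsGT m n P Q z) (hk1 : 1 ≤ k) (hkn : k < n) {q : ℕ} (hq : q < m) :
    z k q ≤ upperBound z k q := by
  have hvert : z k q ≤ z (k + 1) q := hz.2.2.1 k hkn q hq
  unfold upperBound
  split_ifs with hq0
  · exact hq0 ▸ hvert
  · refine le_min ?_ hvert
    obtain ⟨q, rfl⟩ := Nat.exists_eq_succ_of_ne_zero hq0
    obtain ⟨k, rfl⟩ : ∃ k', k = k' + 1 := ⟨k - 1, by omega⟩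
    exact hz.2.2.2.1 k (by omega) q hq

lemma IsGT.updateRow (hz : IsGT m n P Q z) (hk1 : 1 ≤ k) (hkn : k < n) {w : ℕ → ℤ}
    (hw : ∀ q < m, lowerBound m z k q ≤ w q ∧ w q ≤ upperBound z k q) :
    IsGT m n P Q (updateRow m k z w) := by
  obtain ⟨hbot, htop, hvert, hdiag, hout⟩ := hz
  refine ⟨fun q hq => ?_, fun q hq => ?_, fun i hi q hq => ?_, fun i hi q hq => ?_,
    fun i q hiq => ?_⟩ <;> simp only [_root_.updateRow]
  · exact (if_neg (by omega)).trans (hbot q hq)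
  · exact (if_neg (by omega)).trans (htop q hq)
  · split_ifs with h1 h2 h2
    · omega
    · obtain ⟨rfl, -⟩ := h1
      exact (hw q hq).2.trans (upperBound_le z i q)
    · obtain ⟨rfl, -⟩ := h2
      exact (le_lowerBound z (i + 1) q).trans (hw q hq).1
    · exact hvert i hi q hq
  · split_ifs with h1 h2 h2
    · omega
    · obtain ⟨rfl, hq1⟩ := h1
      exact (hw (q + 1) hq1).2.trans (upperBound_le_of_pos (Nat.succ_ne_zero q))
    · obtain ⟨rfl, -⟩ := h2
      exact (le_lowerBound_of_lt hq).trans (hw q (by omega)).1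
    · exact hdiag i hi q hq
  · exact (if_neg (by omega)).trans (hout i q hiq)

lemma sum_Ico_lowerBound_add_upperBound {p : ℕ} (hp : p < m) :
    ∑ q ∈ Finset.Ico p m, (lowerBound m z k q + upperBound z k q) =
      upperBound z k p + ∑ q ∈ Finset.Ico p m, z (k - 1) q +
        ∑ q ∈ Finset.Ico (p + 1) m, z (k + 1) q := by
  obtain ⟨d, rfl⟩ : ∃ d, m = p + d + 1 := ⟨m - p - 1, by omega⟩
  induction d generalizing p with
  | zero =>
    simp only [add_zero, Finset.Ico_self, Finset.sum_empty, Nat.Ico_succ_singleton,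
      Finset.sum_singleton, lowerBound, if_neg (lt_irrefl _)]
    ring
  | succ d ih =>
    have hm : p + 1 + d + 1 = p + (d + 1) + 1 := by omega
    have hrest := ih (p := p + 1) (by omega)
    rw [hm] at hrest
    have e1 := Finset.sum_eq_sum_Ico_succ_bot hp
      (fun q => lowerBound (p + (d + 1) + 1) z k q + upperBound z k q)
    have e2 := Finset.sum_eq_sum_Ico_succ_bot hp (fun q => z (k - 1) q)
    have e3 := Finset.sum_eq_sum_Ico_succ_bot (by omega : p + 1 < p + (d + 1) + 1)
      (fun q => z (k + 1) q)
    have hpair : lowerBound (p + (d + 1) + 1) z k p + upperBound z k (p + 1) =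
        z (k - 1) p + z (k + 1) (p + 1) := by
      rw [lowerBound, upperBound, if_pos (by omega), if_neg (Nat.succ_ne_zero p),
        Nat.add_sub_cancel, add_comm]
      exact min_add_max _ _
    linarith

end Interlacing

/-- Reflects row `k` of `z` inside its interlacing bounds at the positions `q ≥ p`, with the
upper bound at position `p` replaced by `β`. -/
def partialFlip (m k p : ℕ) (β : ℤ) (z : ℕ → ℕ → ℤ) : ℕ → ℕ → ℤ :=
  updateRow m k z fun q =>
    if q < p then z k q else lowerBound m z k q + (if q = p then β else upperBound z k q) - z k q

section PartialFlip

variable {m n : ℕ} {P Q : ℕ → ℤ} {z : ℕ → ℕ → ℤ} {k p : ℕ} {β : ℤ}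

lemma partialFlip_of_ne_or_lt {i q : ℕ} (h : i ≠ k ∨ q < p) :
    partialFlip m k p β z i q = z i q := by
  unfold partialFlip updateRow
  rcases h with hik | hqp
  · exact if_neg fun h' => hik h'.1
  · split_ifs with h'
    · exact (if_pos hqp).trans (congrArg (z · q) h'.1.symm)
    · rfl

lemma partialFlip_self {q : ℕ} (hpq : p ≤ q) (hq : q < m) :
    partialFlip m k p β z k q =
      lowerBound m z k q + (if q = p then β else upperBound z k q) - z k q := by
  simp only [partialFlip, updateRow, and_self, hq, if_true, if_neg (not_lt.mpr hpq)]

lemma partialFlip_of_le {i q : ℕ} (hq : m ≤ q) : partialFlip m k p β z i q = z i q :=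
  if_neg (by omega)

lemma IsGT.partialFlip (hz : IsGT m n P Q z) (hk1 : 1 ≤ k) (hkn : k < n) (hp : p < m)
    (hβ : z k p ≤ β) (hβ' : β ≤ upperBound z k p) : IsGT m n P Q (partialFlip m k p β z) := by
  refine hz.updateRow hk1 hkn fun q hq => ?_
  have hL := hz.lowerBound_le hkn hq
  have hU := hz.le_upperBound hk1 hkn hq
  split_ifs with hqp hqp'
  · exact ⟨hL, hU⟩
  · subst hqp'
    constructor <;> linarith
  · constructor <;> linarith

lemma lowerBound_partialFlip (hk1 : 1 ≤ k) :
    lowerBound m (partialFlip m k p β z) k = lowerBound m z k := by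
  funext q
  simp only [lowerBound, partialFlip_of_ne_or_lt (Or.inl (by omega : k - 1 ≠ k)),
    partialFlip_of_ne_or_lt (Or.inl (by omega : k + 1 ≠ k))]

lemma upperBound_partialFlip (hk1 : 1 ≤ k) :
    upperBound (partialFlip m k p β z) k = upperBound z k := by
  funext q
  simp only [upperBound, partialFlip_of_ne_or_lt (Or.inl (by omega : k - 1 ≠ k)),
    partialFlip_of_ne_or_lt (Or.inl (by omega : k + 1 ≠ k))]

lemma partialFlip_partialFlip (hk1 : 1 ≤ k) :
    partialFlip m k p β (partialFlip m k p β z) = z := by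
  funext i q
  by_cases h : i ≠ k ∨ q < p
  · rw [partialFlip_of_ne_or_lt h, partialFlip_of_ne_or_lt h]
  obtain ⟨rfl, hpq⟩ : i = k ∧ p ≤ q := by omega
  by_cases hq : q < m
  · rw [partialFlip_self hpq hq, lowerBound_partialFlip hk1, upperBound_partialFlip hk1,
      partialFlip_self hpq hq]
    ring
  · rw [partialFlip_of_le (by omega), partialFlip_of_le (by omega)]

lemma sum_partialFlip (hp : p < m) :
    ∑ q ∈ Finset.range m, partialFlip m k p β z k q =
      ∑ q ∈ Finset.range m, z (k - 1) q + ∑ q ∈ Finset.range m, z (k + 1) q -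
        ∑ q ∈ Finset.range m, z k q + (β - z k p + dstat z k p) := by
  have hsplit (f : ℕ → ℤ) := Finset.sum_range_add_sum_Ico f hp.le
  have hhead (f : ℕ → ℤ) := Finset.sum_eq_sum_Ico_succ_bot hp f
  have hflip : ∑ q ∈ Finset.Ico p m, partialFlip m k p β z k q =
      ∑ q ∈ Finset.Ico p m, (lowerBound m z k q + upperBound z k q) -
        ∑ q ∈ Finset.Ico p m, z k q + (β - upperBound z k p) := by
    rw [← Finset.sum_sub_distrib,
      ← Finset.sum_ite_eq_of_mem' _ p (fun _ => β - upperBound z k p) (Finset.left_mem_Ico.mpr hp),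
      ← Finset.sum_add_distrib]
    refine Finset.sum_congr rfl fun q hq => ?_
    rw [partialFlip_self (Finset.mem_Ico.mp hq).1 (Finset.mem_Ico.mp hq).2]
    split_ifs with hqp
    · subst hqp; ring
    · ring
  have hlow : ∑ q ∈ Finset.range p, partialFlip m k p β z k q = ∑ q ∈ Finset.range p, z k q :=
    Finset.sum_congr rfl fun q hq => partialFlip_of_ne_or_lt (Or.inr (Finset.mem_range.mp hq))
  rw [← hsplit, hlow, hflip, sum_Ico_lowerBound_add_upperBound hp, dstat, Finset.sum_sub_distrib,
    Finset.sum_sub_distrib, ← Finset.mul_sum, ← hsplit, ← hsplit, ← hsplit, hhead (z (k + 1))]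
  ring

lemma cnt_partialFlip_self (hk1 : 1 ≤ k) (hp : p < m) :
    cnt m k (partialFlip m k p β z) = cnt m (k + 1) z + (β - z k p + dstat z k p) := by
  simp only [cnt, sum_partialFlip hp, Nat.add_sub_cancel,
    partialFlip_of_ne_or_lt (Or.inl (by omega : k - 1 ≠ k))]
  ring

lemma cnt_partialFlip_succ (hp : p < m) :
    cnt m (k + 1) (partialFlip m k p β z) = cnt m k z - (β - z k p + dstat z k p) := by
  simp only [cnt, sum_partialFlip hp, Nat.add_sub_cancel,
    partialFlip_of_ne_or_lt (Or.inl (by omega : k + 1 ≠ k))]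
  ring

lemma cnt_partialFlip_of_ne {i : ℕ} (hik : i ≠ k) (hik' : i ≠ k + 1) :
    cnt m i (partialFlip m k p β z) = cnt m i z := by
  simp only [cnt, partialFlip_of_ne_or_lt (Or.inl hik),
    partialFlip_of_ne_or_lt (Or.inl (by omega : i - 1 ≠ k))]

end PartialFlip

def benderKnuth (m k : ℕ) (z : ℕ → ℕ → ℤ) : ℕ → ℕ → ℤ := partialFlip m k 0 (z (k + 1) 0) z

section BenderKnuth

variable {m n : ℕ} {P Q : ℕ → ℤ} {z : ℕ → ℕ → ℤ} {k : ℕ}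

lemma IsGT.benderKnuth (hz : IsGT m n P Q z) (hm : 0 < m) (hk1 : 1 ≤ k) (hkn : k < n) :
    IsGT m n P Q (benderKnuth m k z) :=
  hz.partialFlip hk1 hkn hm (hz.2.2.1 k hkn 0 hm) (by rw [upperBound, if_pos rfl])

lemma benderKnuth_benderKnuth (hk1 : 1 ≤ k) : benderKnuth m k (benderKnuth m k z) = z := by
  conv_lhs => rw [benderKnuth, benderKnuth, partialFlip_of_ne_or_lt (Or.inl (by omega))]
  exact partialFlip_partialFlip hk1

lemma content_benderKnuth (hm : 0 < m) {a b : Fin n} (hab : (b : ℕ) = a + 1) (j : Fin n) :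
    content m n (benderKnuth m b z) (Equiv.swap a b j) = content m n z j := by
  have hshift : z (b + 1) 0 - z b 0 + dstat z b 0 = 0 := by simp [dstat]
  rcases eq_or_ne j a with rfl | hja
  · rw [Equiv.swap_apply_left, content, content, benderKnuth, cnt_partialFlip_succ hm, hshift,
      sub_zero, hab]
  rcases eq_or_ne j b with rfl | hjb
  · rw [Equiv.swap_apply_right, content, content, benderKnuth, ← hab,
      cnt_partialFlip_self (by omega) hm, hshift, add_zero]
  · have hja' : (j : ℕ) ≠ a := Fin.val_ne_of_ne hja
    have hjb' : (j : ℕ) ≠ b := Fin.val_ne_of_ne hjb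
    rw [Equiv.swap_apply_of_ne_of_ne hja hjb, content, content, benderKnuth,
      cnt_partialFlip_of_ne (by omega) (by omega)]

lemma isSymmetric_sum_content (hm : 0 < m) {Z : Finset (ℕ → ℕ → ℤ)}
    (hZ : ∀ z, z ∈ Z ↔ IsGT m n P Q z) :
    (∑ z ∈ Z, ∏ j, X j ^ content m n z j : MvPolynomial (Fin n) ℤ).IsSymmetric := by
  refine isSymmetric_of_rename_swap fun a b hab =>
    rename_sum_prod_X_pow_eq_self _ _ _ (benderKnuth m b) (fun z hz => ?_) (fun z _ => ?_)
      (fun z _ => content_benderKnuth hm hab)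
  · exact (hZ _).mpr (((hZ z).mp hz).benderKnuth hm (by omega) b.2)
  · exact benderKnuth_benderKnuth (by omega)

end BenderKnuth

/-- Row `k` of a GT parallelogram counts the entries `k`, whose exponent in `a_{γ + c(z)}` has
index `k - 1 : Fin n`. -/
def gap {n : ℕ} (γ : Fin n → ℕ) (k : ℕ) : ℤ :=
  if hk : k < n then (γ ⟨k - 1, by omega⟩ : ℤ) - γ ⟨k, hk⟩ else 0

def IsViolation (m : ℕ) {n : ℕ} (γ : Fin n → ℕ) (z : ℕ → ℕ → ℤ) (k p : ℕ) : Prop :=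
  1 ≤ k ∧ k < n ∧ p < m ∧ dstat z k p ≤ -gap γ k

def IsAdmissible (m : ℕ) {n : ℕ} (γ : Fin n → ℕ) (z : ℕ → ℕ → ℤ) : Prop :=
  ∀ k p, ¬ IsViolation m γ z k p

noncomputable def violationPos (m : ℕ) {n : ℕ} (γ : Fin n → ℕ) (z : ℕ → ℕ → ℤ) : ℕ :=
  sInf {p | ∃ k, IsViolation m γ z k p}

noncomputable def violationRow (m : ℕ) {n : ℕ} (γ : Fin n → ℕ) (z : ℕ → ℕ → ℤ) : ℕ :=
  Nat.findGreatest (fun k => IsViolation m γ z k (violationPos m γ z)) n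

def reflectionPoint {n : ℕ} (γ : Fin n → ℕ) (z : ℕ → ℕ → ℤ) (k p : ℕ) : ℤ :=
  z k p - dstat z k p - gap γ k

/-- Flip at the last row of the first violating position; the choice of the reflection point
makes the flipped parallelogram violate at the same place and shifts the content by the gap. -/
noncomputable def ballotFlip (m : ℕ) {n : ℕ} (γ : Fin n → ℕ) (z : ℕ → ℕ → ℤ) : ℕ → ℕ → ℤ :=
  partialFlip m (violationRow m γ z) (violationPos m γ z)
    (reflectionPoint γ z (violationRow m γ z) (violationPos m γ z)) z

lemma dstat_succ (z : ℕ → ℕ → ℤ) (k p : ℕ) :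
    dstat z k (p + 1) =
      dstat z k p + (z k p - z (k - 1) p) + (z k (p + 1) - z (k + 1) (p + 1)) := by
  simp only [dstat, Finset.sum_range_succ]
  ring

lemma dstat_congr {z z' : ℕ → ℕ → ℤ} {k p : ℕ} (hlt : ∀ i, ∀ q < p, z' i q = z i q)
    (hk : z' k p = z k p) (hk' : z' (k + 1) p = z (k + 1) p) : dstat z' k p = dstat z k p := by
  simp only [dstat, hk, hk']
  congr 2
  exact Finset.sum_congr rfl fun q hq => by simp only [hlt _ q (Finset.mem_range.mp hq)]

section Violations

variable {m n : ℕ} {γ : Fin n → ℕ} {z : ℕ → ℕ → ℤ} {k p : ℕ}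

lemma gap_nonneg (hγ : Antitone γ) (k : ℕ) : 0 ≤ gap γ k := by
  unfold gap
  split_ifs with hk
  · have := hγ (show (⟨k - 1, by omega⟩ : Fin n) ≤ ⟨k, hk⟩ from Fin.mk_le_mk.mpr (Nat.sub_le k 1))
    omega
  · exact le_rfl

lemma isViolation_iff_le_reflectionPoint (hk1 : 1 ≤ k) (hkn : k < n) (hp : p < m) :
    IsViolation m γ z k p ↔ z k p ≤ reflectionPoint γ z k p := by
  simp only [IsViolation, reflectionPoint, hk1, hkn, hp, true_and]
  constructor <;> intro <;> linarith

lemma isViolation_violationRow (h : ¬ IsAdmissible m γ z) :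
    IsViolation m γ z (violationRow m γ z) (violationPos m γ z) := by
  simp only [IsAdmissible, not_forall, not_not] at h
  obtain ⟨k, p, hv⟩ := h
  obtain ⟨k', hk'⟩ := Nat.sInf_mem (s := {p | ∃ k, IsViolation m γ z k p}) ⟨p, k, hv⟩
  exact Nat.findGreatest_spec (P := fun k => IsViolation m γ z k (violationPos m γ z))
    hk'.2.1.le hk'

lemma not_isViolation_of_lt_violationPos {p' : ℕ} (hp' : p' < violationPos m γ z) (k' : ℕ) :
    ¬ IsViolation m γ z k' p' :=
  fun hv => Nat.notMem_of_lt_sInf hp' ⟨k', hv⟩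

lemma not_isViolation_of_violationRow_lt {k' : ℕ} (hk' : violationRow m γ z < k') :
    ¬ IsViolation m γ z k' (violationPos m γ z) :=
  fun hv => Nat.findGreatest_is_greatest hk' hv.2.1.le hv

lemma violationPos_eq (hv : IsViolation m γ z k p)
    (hmin : ∀ p' < p, ∀ k', ¬ IsViolation m γ z k' p') : violationPos m γ z = p :=
  le_antisymm (Nat.sInf_le ⟨k, hv⟩) <| not_lt.mp fun hlt => by
    obtain ⟨k', hk'⟩ := Nat.sInf_mem (s := {p | ∃ k, IsViolation m γ z k p}) ⟨p, k, hv⟩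
    exact hmin _ hlt k' hk'

lemma violationRow_eq (hv : IsViolation m γ z k p) (hpos : violationPos m γ z = p)
    (hmax : ∀ k', k < k' → ¬ IsViolation m γ z k' p) : violationRow m γ z = k := by
  rw [violationRow, hpos, Nat.findGreatest_eq_iff]
  exact ⟨hv.2.1.le, fun _ => hv, fun k' hk' _ => hmax k' hk'⟩

end Violations

section BallotFlip

variable {m n : ℕ} {P Q : ℕ → ℤ} {γ : Fin n → ℕ} {z : ℕ → ℕ → ℤ} {k p : ℕ} {β : ℤ}

lemma IsGT.reflectionPoint_le_upperBound (hz : IsGT m n P Q z) (hγ : Antitone γ) (hk1 : 1 ≤ k)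
    (hkn : k < n) (hp : p < m) (hprev : ∀ p' < p, ¬ IsViolation m γ z k p') :
    reflectionPoint γ z k p ≤ upperBound z k p := by
  have hgap := gap_nonneg hγ k
  rcases p with _ | p
  · simp only [reflectionPoint, dstat, Finset.range_zero, Finset.sum_empty, upperBound, if_pos]
    linarith
  · have hd : -gap γ k < dstat z k p := by
      by_contra! hd
      exact hprev p (by omega) ⟨hk1, hkn, by omega, hd⟩
    have hvert : z (k - 1) p ≤ z k p := hz.mono (Nat.sub_le k 1) hkn.le (by omega)
    have hdiag : z (k + 1) (p + 1) ≤ z k p := hz.2.2.2.1 k hkn p hp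
    rw [reflectionPoint, dstat_succ, upperBound, if_neg (Nat.succ_ne_zero p), Nat.add_sub_cancel]
    exact le_min (by linarith) (by linarith)

lemma isViolation_partialFlip_iff {k' p' : ℕ} (hne : p' < p ∨ (p' = p ∧ k < k')) :
    IsViolation m γ (partialFlip m k p β z) k' p' ↔ IsViolation m γ z k' p' := by
  have hd : dstat (partialFlip m k p β z) k' p' = dstat z k' p' :=
    dstat_congr (fun _ _ hq => partialFlip_of_ne_or_lt (Or.inr (by omega)))
      (partialFlip_of_ne_or_lt (by omega)) (partialFlip_of_ne_or_lt (by omega))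
  simp only [IsViolation, hd]

lemma reflectionPoint_partialFlip :
    reflectionPoint γ (partialFlip m k p β z) k p = reflectionPoint γ z k p := by
  have hsum : ∑ q ∈ Finset.range p, (2 * partialFlip m k p β z k q -
      partialFlip m k p β z (k - 1) q - partialFlip m k p β z (k + 1) q) =
      ∑ q ∈ Finset.range p, (2 * z k q - z (k - 1) q - z (k + 1) q) :=
    Finset.sum_congr rfl fun q hq => by
      simp only [partialFlip_of_ne_or_lt (Or.inr (Finset.mem_range.mp hq))]
  rw [reflectionPoint, reflectionPoint, dstat, dstat, hsum,
    partialFlip_of_ne_or_lt (Or.inl (by omega : k + 1 ≠ k))]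
  ring

lemma isViolation_ballotFlip (hz : IsGT m n P Q z) (h : ¬ IsAdmissible m γ z) :
    IsViolation m γ (ballotFlip m γ z) (violationRow m γ z) (violationPos m γ z) := by
  obtain ⟨hk1, hkn, hp, -⟩ := isViolation_violationRow h
  rw [isViolation_iff_le_reflectionPoint hk1 hkn hp, ballotFlip, reflectionPoint_partialFlip,
    partialFlip_self le_rfl hp, if_pos rfl]
  linarith [hz.lowerBound_le hkn hp]

lemma violationPos_ballotFlip (hz : IsGT m n P Q z) (h : ¬ IsAdmissible m γ z) :
    violationPos m γ (ballotFlip m γ z) = violationPos m γ z :=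
  violationPos_eq (isViolation_ballotFlip hz h) fun _ hp' k' =>
    (isViolation_partialFlip_iff (Or.inl hp')).not.mpr (not_isViolation_of_lt_violationPos hp' k')

lemma violationRow_ballotFlip (hz : IsGT m n P Q z) (h : ¬ IsAdmissible m γ z) :
    violationRow m γ (ballotFlip m γ z) = violationRow m γ z :=
  violationRow_eq (isViolation_ballotFlip hz h) (violationPos_ballotFlip hz h) fun _ hk' =>
    (isViolation_partialFlip_iff (Or.inr ⟨rfl, hk'⟩)).not.mpr
      (not_isViolation_of_violationRow_lt hk')

lemma IsGT.ballotFlip (hz : IsGT m n P Q z) (hγ : Antitone γ) (h : ¬ IsAdmissible m γ z) :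
    IsGT m n P Q (ballotFlip m γ z) := by
  have hv := isViolation_violationRow h
  obtain ⟨hk1, hkn, hp, -⟩ := isViolation_violationRow h
  exact hz.partialFlip hk1 hkn hp ((isViolation_iff_le_reflectionPoint hk1 hkn hp).mp hv)
    (hz.reflectionPoint_le_upperBound hγ hk1 hkn hp fun p' hp' =>
      not_isViolation_of_lt_violationPos hp' _)

lemma ballotFlip_ballotFlip (hz : IsGT m n P Q z) (h : ¬ IsAdmissible m γ z) :
    ballotFlip m γ (ballotFlip m γ z) = z := by
  have hk1 := (isViolation_violationRow h).1
  conv_lhs => rw [ballotFlip, violationPos_ballotFlip hz h, violationRow_ballotFlip hz h,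
    ballotFlip, reflectionPoint_partialFlip]
  exact partialFlip_partialFlip hk1

lemma cnt_ballotFlip_violationRow (h : ¬ IsAdmissible m γ z) :
    cnt m (violationRow m γ z) (ballotFlip m γ z) =
      cnt m (violationRow m γ z + 1) z - gap γ (violationRow m γ z) := by
  obtain ⟨hk1, -, hp, -⟩ := isViolation_violationRow h
  rw [ballotFlip, cnt_partialFlip_self hk1 hp, reflectionPoint]
  ring

lemma cnt_ballotFlip_violationRow_succ (h : ¬ IsAdmissible m γ z) :
    cnt m (violationRow m γ z + 1) (ballotFlip m γ z) =
      cnt m (violationRow m γ z) z + gap γ (violationRow m γ z) := by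
  obtain ⟨-, -, hp, -⟩ := isViolation_violationRow h
  rw [ballotFlip, cnt_partialFlip_succ hp, reflectionPoint]
  ring

lemma alt_ballotFlip (hz : IsGT m n P Q z) (hγ : Antitone γ) (h : ¬ IsAdmissible m γ z) :
    alt n (γ + content m n (ballotFlip m γ z)) = -alt n (γ + content m n z) := by
  obtain ⟨hk1, hkn, -, -⟩ := isViolation_violationRow h
  have hself := cnt_ballotFlip_violationRow h
  have hsucc := cnt_ballotFlip_violationRow_succ h
  have hgap0 := gap_nonneg hγ (violationRow m γ z)
  set k := violationRow m γ z
  set a : Fin n := ⟨k - 1, by omega⟩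
  set b : Fin n := ⟨k, hkn⟩
  have hgap : gap γ k = (γ a : ℤ) - γ b := dif_pos hkn
  have ha : (a : ℕ) + 1 = k := Nat.sub_add_cancel hk1
  have hb : (b : ℕ) = k := rfl
  rw [← alt_comp_swap _ (Fin.ne_of_val_ne (by omega) : a ≠ b)]
  congr 1
  funext j
  simp only [Function.comp_apply, Pi.add_apply, content]
  rcases eq_or_ne j a with rfl | hja
  · have := (hz.ballotFlip hγ h).cnt_nonneg ⟨hk1, hkn.le⟩
    rw [hself] at this
    rw [Equiv.swap_apply_left, ha, hb, hself]
    omega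
  rcases eq_or_ne j b with rfl | hjb
  · have := hz.cnt_nonneg ⟨hk1, hkn.le⟩
    rw [Equiv.swap_apply_right, ha, hb, hsucc]
    omega
  · have hja' : (j : ℕ) ≠ a := Fin.val_ne_of_ne hja
    have hjb' : (j : ℕ) ≠ b := Fin.val_ne_of_ne hjb
    rw [Equiv.swap_apply_of_ne_of_ne hja hjb, ballotFlip,
      cnt_partialFlip_of_ne (by omega) (by omega)]

theorem sum_alt_of_not_isAdmissible (hγ : Antitone γ) {Z : Finset (ℕ → ℕ → ℤ)}
    (hZ : ∀ z, z ∈ Z ↔ IsGT m n P Q z) :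
    ∑ z ∈ Z with ¬ IsAdmissible m γ z, alt n (γ + content m n z) = 0 := by
  have mem : ∀ z, z ∈ {z ∈ Z | ¬ IsAdmissible m γ z} ↔ IsGT m n P Q z ∧ ¬ IsAdmissible m γ z :=
    fun z => by rw [Finset.mem_filter, hZ]
  refine Finset.sum_involution (fun z _ => ballotFlip m γ z) (fun z hz => ?_)
    (fun z hz hne heq => ?_) (fun z hz => ?_) (fun z hz => ?_) <;> rw [mem] at hz
  · rw [alt_ballotFlip hz.1 hγ hz.2, add_neg_cancel]
  · have := alt_ballotFlip hz.1 hγ hz.2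
    rw [heq] at this
    exact hne (self_eq_neg.mp this)
  · exact (mem _).mpr ⟨hz.1.ballotFlip hγ hz.2, fun hadm =>
      hadm _ _ (isViolation_ballotFlip hz.1 hz.2)⟩
  · exact ballotFlip_ballotFlip hz.1 hz.2

end BallotFlip

section Delta

variable {m n : ℕ} {η : Fin n → ℕ}

lemma antitone_add_delta (hη : Antitone η) : Antitone fun j : Fin n => η j + (n - 1 - (j : ℕ)) :=
  fun i j hij => by
    have := hη hij
    have : (i : ℕ) ≤ j := hij
    dsimp only
    omega

lemma gap_add_delta {k : ℕ} (hk1 : 1 ≤ k) (hk : k < n) :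
    gap (fun j : Fin n => η j + (n - 1 - (j : ℕ))) k =
      (η ⟨k - 1, (Nat.sub_le k 1).trans_lt hk⟩ : ℤ) - η ⟨k, hk⟩ + 1 := by
  rw [gap, dif_pos hk]
  push_cast
  omega

lemma isAdmissible_add_delta_iff {z : ℕ → ℕ → ℤ} :
    IsAdmissible m (fun j => η j + (n - 1 - (j : ℕ))) z ↔
      ∀ k, ∀ _ : 1 ≤ k, ∀ hk : k < n, ∀ p < m,
        -((η ⟨k - 1, (Nat.sub_le k 1).trans_lt hk⟩ : ℤ) - (η ⟨k, hk⟩ : ℤ)) ≤ dstat z k p := by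
  simp only [IsAdmissible, IsViolation, not_and, not_le]
  constructor
  · intro H k hk1 hkn p hp
    have := H k p hk1 hkn hp
    rw [gap_add_delta hk1 hkn] at this
    omega
  · intro H k p hk1 hkn hp
    have := H k hk1 hkn p hp
    rw [gap_add_delta hk1 hkn]
    omega

end Delta

/-- The Zelevinsky–Stembridge rule.  For a weakly decreasing
`η : Fin n → ℕ` (with `η j` playing the role of `η_{j+1}`) and
`δ = (n-1,…,1,0)`, the product `a_{η+δ} · s_{P/Q}` equals the sum of the
alternants `a_{η+c(z)+δ}` over all `η`-ballot-admissible GT `n`-parallelograms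
`z` framed by `P/Q`, where `c(z) = (#_1(z),…,#_n(z))`. -/
theorem zelevinsky_stembridge_rule
    (m n : ℕ) (P Q : ℕ → ℤ) (h : ShapeHyps m n P Q)
    (η : Fin n → ℕ) (hη : Antitone η) :
    alt n (fun j => η j + (n - 1 - (j : ℕ))) * skewSchur m n P Q
      = ∑ᶠ z ∈ {z : ℕ → ℕ → ℤ | IsGT m n P Q z ∧
          ∀ k, ∀ _ : 1 ≤ k, ∀ hk : k < n, ∀ p < m,
            -((η ⟨k - 1, by omega⟩ : ℤ) - (η ⟨k, hk⟩ : ℤ)) ≤ dstat z k p},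
          alt n (fun j => η j + (cnt m ((j : ℕ) + 1) z).toNat + (n - 1 - (j : ℕ))) := by
  set γ : Fin n → ℕ := fun j => η j + (n - 1 - (j : ℕ))
  have hm : 0 < m := by obtain ⟨h2, hnm, -⟩ := h; omega
  set Z := (finite_setOf_isGT (m := m) (n := n) (P := P) (Q := Q)).toFinset
  have hZ : ∀ z, z ∈ Z ↔ IsGT m n P Q z := fun z => Set.Finite.mem_toFinset _
  calc alt n γ * skewSchur m n P Q = ∑ z ∈ Z, alt n (γ + content m n z) := by
        rw [skewSchur_eq_sum_content h hZ,
          alt_mul_sum_eq_sum_alt _ _ _ (isSymmetric_sum_content hm hZ)]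
    _ = ∑ z ∈ Z with IsAdmissible m γ z, alt n (γ + content m n z) := by
        rw [← Finset.sum_filter_add_sum_filter_not Z (IsAdmissible m γ),
          sum_alt_of_not_isAdmissible (antitone_add_delta hη) hZ, add_zero]
    _ = _ := by
        rw [← finsum_mem_coe_finset]
        refine finsum_mem_congr (Set.ext fun z => ?_) fun z _ => congrArg _ (funext fun j => ?_)
        · rw [Finset.mem_coe, Finset.mem_filter, hZ, isAdmissible_add_delta_iff]
          rfl
        · simp only [γ, content, Pi.add_apply]
          ring
end

section
/- Let S and T be semistandard n-tableaux of shape P/Q. Then the cellwise minimum (r,c) ↦ min{S(r,c), T(r,c)} and the cellwise maximum (r,c) ↦ max{S(r,c), T(r,c)} are again semistandard n-tableaux of shape P/Q. Consequently, the set of all semistandard n-tableaux of shape P/Q, partially ordered by S ≤ T iff S(r,c) ≥ T(r,c) for every cell (r,c), is a distributive lattice in which the join of S and T is their cellwise minimum and the meet of S and T is their cellwise maximum. -/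
open Finset
open scoped Classical

namespace IsSSYT

variable {m n : ℕ} {P Q : ℕ → ℤ} {S T : ℕ × ℤ → ℕ}

theorem inf (hS : IsSSYT m n P Q S) (hT : IsSSYT m n P Q T) : IsSSYT m n P Q (S ⊓ T) := by
  obtain ⟨hS_range, hS_row, hS_col, hS_out⟩ := hS
  obtain ⟨hT_range, hT_row, hT_col, hT_out⟩ := hT
  refine ⟨fun x hx => ⟨le_min (hS_range x hx).1 (hT_range x hx).1,
      (min_le_left _ _).trans (hS_range x hx).2⟩,
    fun r c h h' => min_le_min (hS_row r c h h') (hT_row r c h h'),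
    fun r c h h' => min_lt_min (hS_col r c h h') (hT_col r c h h'),
    fun x hx => by simp [hS_out x hx, hT_out x hx]⟩

theorem sup (hS : IsSSYT m n P Q S) (hT : IsSSYT m n P Q T) : IsSSYT m n P Q (S ⊔ T) := by
  obtain ⟨hS_range, hS_row, hS_col, hS_out⟩ := hS
  obtain ⟨hT_range, hT_row, hT_col, hT_out⟩ := hT
  refine ⟨fun x hx => ⟨(hS_range x hx).1.trans (le_max_left _ _),
      max_le (hS_range x hx).2 (hT_range x hx).2⟩,
    fun r c h h' => max_le_max (hS_row r c h h') (hT_row r c h h'),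
    fun r c h h' => max_lt_max (hS_col r c h h') (hT_col r c h h'),
    fun x hx => by simp [hS_out x hx, hT_out x hx]⟩

theorem le_iff_forall_mem_cells_le (hS : IsSSYT m n P Q S) (hT : IsSSYT m n P Q T) :
    S ≤ T ↔ ∀ x ∈ cells m P Q, S x ≤ T x := by
  refine ⟨fun hle x _ => hle x, fun hle x => ?_⟩
  by_cases hx : x ∈ cells m P Q
  · exact hle x hx
  · simp [hS.2.2.2 x hx, hT.2.2.2 x hx]

end IsSSYT

def ssytSublattice (m n : ℕ) (P Q : ℕ → ℤ) : Sublattice (ℕ × ℤ → ℕ) where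
  carrier := {T | IsSSYT m n P Q T}
  supClosed' _ hS _ hT := IsSSYT.sup hS hT
  infClosed' _ hS _ hT := IsSSYT.inf hS hT

-- The tableau order is the reverse of the pointwise order, so the lattice is the order dual
-- of the sublattice of semistandard tableaux inside `ℕ × ℤ → ℕ`.
theorem ssyt_distributive_lattice_general
    (m n : ℕ) (P Q : ℕ → ℤ) :
    (∀ S T : ℕ × ℤ → ℕ, IsSSYT m n P Q S → IsSSYT m n P Q T →
      IsSSYT m n P Q (fun x => min (S x) (T x)) ∧
      IsSSYT m n P Q (fun x => max (S x) (T x))) ∧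
    ∃ inst : DistribLattice {T : ℕ × ℤ → ℕ // IsSSYT m n P Q T},
      (∀ S T : {T : ℕ × ℤ → ℕ // IsSSYT m n P Q T},
        inst.le S T ↔ ∀ x ∈ cells m P Q, T.1 x ≤ S.1 x) ∧
      (∀ S T : {T : ℕ × ℤ → ℕ // IsSSYT m n P Q T},
        (inst.sup S T).1 = fun x => min (S.1 x) (T.1 x)) ∧
      (∀ S T : {T : ℕ × ℤ → ℕ // IsSSYT m n P Q T},
        (inst.inf S T).1 = fun x => max (S.1 x) (T.1 x)) :=
  ⟨fun _ _ hS hT => ⟨hS.inf hT, hS.sup hT⟩,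
    inferInstanceAs (DistribLattice (ssytSublattice m n P Q)ᵒᵈ),
    fun S T => T.2.le_iff_forall_mem_cells_le S.2, fun _ _ => rfl, fun _ _ => rfl⟩

/-- The cellwise minimum and maximum of two semistandard
`n`-tableaux of shape `P/Q` are again semistandard, and consequently the set of
semistandard `n`-tableaux of shape `P/Q`, ordered by reverse entrywise
comparison, is a distributive lattice whose join is the cellwise minimum and
whose meet is the cellwise maximum. -/
theorem ssyt_distributive_lattice
    (m n : ℕ) (P Q : ℕ → ℤ) (h : ShapeHyps m n P Q) :
    (∀ S T : ℕ × ℤ → ℕ, IsSSYT m n P Q S → IsSSYT m n P Q T →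
      IsSSYT m n P Q (fun x => min (S x) (T x)) ∧
      IsSSYT m n P Q (fun x => max (S x) (T x))) ∧
    ∃ inst : DistribLattice {T : ℕ × ℤ → ℕ // IsSSYT m n P Q T},
      (∀ S T : {T : ℕ × ℤ → ℕ // IsSSYT m n P Q T},
        inst.le S T ↔ ∀ x ∈ cells m P Q, T.1 x ≤ S.1 x) ∧
      (∀ S T : {T : ℕ × ℤ → ℕ // IsSSYT m n P Q T},
        (inst.sup S T).1 = fun x => min (S.1 x) (T.1 x)) ∧
      (∀ S T : {T : ℕ × ℤ → ℕ // IsSSYT m n P Q T},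
        (inst.inf S T).1 = fun x => max (S.1 x) (T.1 x)) :=
  ssyt_distributive_lattice_general m n P Q
end

section
/- Let x be a GT n-parallelogram framed by P/Q and let k ∈ {1,…,n−1}. For i ∈ {0,…,m−1} set b_i := max{g_{k−1,k−1−i}(x), g_{k+1,k−i}(x)} and t_i := min{g_{k−1,k−i}(x), g_{k+1,k+1−i}(x)}, where a term is omitted from the max or min if the referenced position lies outside the index set. Then b_i ≤ t_i for every i ∈ {0,…,m−1}; and an integer array y, indexed like x and agreeing with x at every position (p,q) with p ≠ k, is a GT n-parallelogram framed by P/Q if and only if b_i ≤ g_{k,k−i}(y) ≤ t_i for every i ∈ {0,…,m−1}. (Hence the color-k component of x in the edge-colored lattice of GT n-parallelograms is order-isomorphic to a product of chains.) -/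
open Finset
open scoped Classical

/-- `b_i = max{g_{k-1,k-1-i}, g_{k+1,k-i}}` (the second term is omitted when the
position `(k+1, k-i)` is out of range, i.e. when `i = m-1`). -/
def bval (m : ℕ) (x : ℕ → ℕ → ℤ) (k i : ℕ) : ℤ :=
  if i + 1 < m then max (x (k - 1) i) (x (k + 1) (i + 1)) else x (k - 1) i

/-- `t_i = min{g_{k-1,k-i}, g_{k+1,k+1-i}}` (the first term is omitted when the
position `(k-1, k-i)` is out of range, i.e. when `i = 0`). -/
def tval (m : ℕ) (x : ℕ → ℕ → ℤ) (k i : ℕ) : ℤ :=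
  if 1 ≤ i then min (x (k - 1) (i - 1)) (x (k + 1) i) else x (k + 1) i

/-- For a GT `n`-parallelogram `x` and a color `k`, the
bounds `b_i ≤ t_i` hold, and an array `y` agreeing with `x` off column `k` is a
GT `n`-parallelogram exactly when its column-`k` entries lie in the intervals
`[b_i, t_i]` (and are normalized to `0` out of range); hence the color-`k`
component of `x` is a product of chains. -/
theorem color_component_product_of_chains
    (m n : ℕ) (P Q : ℕ → ℤ) (h : ShapeHyps m n P Q)
    (x : ℕ → ℕ → ℤ) (hx : IsGT m n P Q x)
    (k : ℕ) (hk1 : 1 ≤ k) (hk2 : k < n) :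
    (∀ i < m, bval m x k i ≤ tval m x k i) ∧
    (∀ y : ℕ → ℕ → ℤ, (∀ p q, p ≠ k → y p q = x p q) →
      (IsGT m n P Q y ↔
        ((∀ q, m ≤ q → y k q = 0) ∧
          ∀ i < m, bval m x k i ≤ y k i ∧ y k i ≤ tval m x k i))) := by
  obtain ⟨hn2, hnm, hPd, hPm, hQd, hQm, hQP, hcol⟩ := h
  obtain ⟨hx1, hx2, hx3, hx4, hx5⟩ := hx
  have ek : k - 1 + 1 = k := by omega
  have h1 : ∀ i < m, x (k-1) i ≤ x (k+1) i := by
    intro i hi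
    have a := hx3 (k-1) (by omega) i hi
    have b := hx3 k (by omega) i hi
    rw [ek] at a
    omega
  have h2 : ∀ i, 1 ≤ i → i < m → x (k-1) i ≤ x (k-1) (i-1) := by
    intro i h1i him
    have ei : i - 1 + 1 = i := by omega
    rcases Nat.lt_or_ge k 2 with hk | hk
    · have hk1' : k = 1 := by omega
      subst hk1'
      show x 0 i ≤ x 0 (i-1)
      rw [hx1 i him, hx1 (i-1) (by omega), ei]
      exact hQd i h1i him
    · have e2 : k - 2 + 1 = k - 1 := by omega
      have a := hx4 (k-2) (by omega) (i-1) (by rw [ei]; omega)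
      have b := hx3 (k-2) (by omega) (i-1) (by omega)
      rw [e2, ei] at a
      rw [e2] at b
      omega
  have h3 : ∀ i, i + 1 < m → x (k+1) (i+1) ≤ x (k+1) i := by
    intro i him
    have a := hx4 k (by omega) i him
    have b := hx3 k (by omega) i (by omega)
    omega
  have h4 : ∀ i, 1 ≤ i → i + 1 < m → x (k+1) (i+1) ≤ x (k-1) (i-1) := by
    intro i h1i him
    have ei : i - 1 + 1 = i := by omega
    have a := hx4 k (by omega) i him
    have b := hx4 (k-1) (by omega) (i-1) (by rw [ei]; omega)
    rw [ek, ei] at b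
    omega
  constructor
  · intro i hi
    by_cases hi1 : i + 1 < m <;> by_cases hi0 : 1 ≤ i
    · rw [bval, tval, if_pos hi1, if_pos hi0]
      exact max_le (le_min (h2 i hi0 hi) (h1 i hi)) (le_min (h4 i hi0 hi1) (h3 i hi1))
    · rw [bval, tval, if_pos hi1, if_neg hi0]
      exact max_le (h1 i hi) (h3 i hi1)
    · rw [bval, tval, if_neg hi1, if_pos hi0]
      exact le_min (h2 i hi0 hi) (h1 i hi)
    · rw [bval, tval, if_neg hi1, if_neg hi0]
      exact h1 i hi
  · intro y hy
    constructor
    · rintro ⟨hy1, hy2, hy3, hy4, hy5⟩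
      refine ⟨fun q hq => hy5 k q (Or.inr hq), fun i hi => ?_⟩
      constructor
      · have a := hy3 (k-1) (by omega) i hi
        rw [ek, hy (k-1) i (by omega)] at a
        by_cases hi1 : i + 1 < m
        · have b := hy4 k (by omega) i hi1
          rw [hy (k+1) (i+1) (by omega)] at b
          rw [bval, if_pos hi1]
          exact max_le a b
        · rw [bval, if_neg hi1]; exact a
      · have a := hy3 k (by omega) i hi
        rw [hy (k+1) i (by omega)] at a
        by_cases hi0 : 1 ≤ i
        · have ei : i - 1 + 1 = i := by omega
          have b := hy4 (k-1) (by omega) (i-1) (by rw [ei]; omega)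
          rw [ek, ei, hy (k-1) (i-1) (by omega)] at b
          rw [tval, if_pos hi0]
          exact le_min b a
        · rw [tval, if_neg hi0]; exact a
    · rintro ⟨hz, hbt⟩
      refine ⟨?_, ?_, ?_, ?_, ?_⟩
      · intro j hj; rw [hy 0 j (by omega)]; exact hx1 j hj
      · intro j hj; rw [hy n j (by omega)]; exact hx2 j hj
      · intro i hi j hj
        by_cases e1 : i = k
        · subst e1
          obtain ⟨_, ht⟩ := hbt j hj
          rw [hy (i+1) j (by omega)]
          have htt : tval m x i j ≤ x (i+1) j := by
            rw [tval]; split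
            · exact min_le_right _ _
            · exact le_rfl
          omega
        · by_cases e2 : i + 1 = k
          · obtain ⟨hb, _⟩ := hbt j hj
            have hbb : x (k-1) j ≤ bval m x k j := by
              rw [bval]; split
              · exact le_max_left _ _
              · exact le_rfl
            rw [hy i j e1, e2]
            have hik : i = k - 1 := by omega
            rw [hik]
            omega
          · rw [hy i j e1, hy (i+1) j e2]
            exact hx3 i hi j hj
      · intro i hi j hj
        by_cases e1 : i = k
        · subst e1
          obtain ⟨hb, _⟩ := hbt j (by omega)
          rw [hy (i+1) (j+1) (by omega)]
          have hbb : x (i+1) (j+1) ≤ bval m x i j := by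
            rw [bval, if_pos hj]
            exact le_max_right _ _
          omega
        · by_cases e2 : i + 1 = k
          · obtain ⟨_, ht⟩ := hbt (j+1) hj
            have htt : tval m x k (j+1) ≤ x (k-1) j := by
              rw [tval, if_pos (by omega : 1 ≤ j + 1)]
              simp only [Nat.add_sub_cancel]
              exact min_le_left _ _
            rw [hy i j e1, e2]
            have hik : i = k - 1 := by omega
            rw [hik]
            omega
          · rw [hy i j e1, hy (i+1) (j+1) e2]
            exact hx4 i hi j hj
      · intro i j hij
        by_cases e1 : i = k
        · subst e1
          exact hz j (by omega)
        · rw [hy i j e1]; exact hx5 i j hij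
end

section
/- Set P′ := (P_1,…,P_m,0,…,0) (an (m+n)-tuple) and Q′ := (0,…,0) (an (m+n)-tuple). For a GT n-parallelogram x framed by P/Q, let φ(x) be the integer array indexed by k ∈ {0,…,m+n} and l ∈ C′_k := {k−(m+n−1),…,k} defined by: φ(x)_{k,l} := g_{0,l−m}(x) if 1 ≤ k ≤ m−1 and 1 ≤ l ≤ k; φ(x)_{k,l} := g_{k−m,l−m}(x) if m ≤ k ≤ m+n and k−m+1 ≤ l ≤ k; and φ(x)_{k,l} := 0 otherwise. Here GT (m+n)-parallelograms framed by P′/Q′ are defined exactly as GT n-parallelograms framed by P/Q but with both parameters m and n replaced by m+n and (P,Q) replaced by (P′,Q′). Then: (i) φ(x) is a GT (m+n)-parallelogram framed by P′/Q′; (ii) φ is injective; (iii) for GT n-parallelograms s,t framed by P/Q and i ∈ {1,…,n−1}, s →^i t if and only if φ(s) →^{i+m} φ(t); (iv) for every such edge, the edge coefficients computed in the (m+n)-setting agree with those in the n-setting: X_{φ(t),φ(s)} = X_{t,s} and Y_{φ(s),φ(t)} = Y_{s,t}; and (v) the image of φ is exactly the set of GT (m+n)-parallelograms framed by P′/Q′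 whose entries in every column k ∈ {0,1,…,m} ∪ {m+n} agree with the corresponding entries of φ(x₀) for some (equivalently, every) GT n-parallelogram x₀ framed by P/Q. -/
open Finset
open scoped Classical

def EdgeAt (m i : ℕ) (s t : ℕ → ℕ → ℤ) (κ : ℕ) : Prop :=
  κ < m ∧ s i κ + 1 = t i κ ∧ ∀ p q, ¬(p = i ∧ q = κ) → s p q = t p q

def Edge (m i : ℕ) (s t : ℕ → ℕ → ℤ) : Prop :=
  ∃ κ, EdgeAt m i s t κ

noncomputable def Xcoef (m i κ : ℕ) (g : ℕ → ℕ → ℤ) : ℚ :=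
  - (∏ l ∈ Finset.range m, ((g i κ - g (i + 1) l + l - κ - 1 : ℤ) : ℚ)) /
    (∏ l ∈ (Finset.range m).erase κ, ((g i κ - g i l + l - κ - 1 : ℤ) : ℚ))

noncomputable def Ycoef (m i κ : ℕ) (g : ℕ → ℕ → ℤ) : ℚ :=
  (∏ l ∈ Finset.range m, ((g i κ - g (i - 1) l + l - κ : ℤ) : ℚ)) /
    (∏ l ∈ (Finset.range m).erase κ, ((g i κ - g i l + l - κ : ℤ) : ℚ))

/-- The embedding `φ` of GT `n`-parallelograms framed by `P/Q` into
GT `(m+n)`-parallelograms framed by `P′/Q′` (in slot coordinates: the entry of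
`φ(x)` in column `k`, slot `κ`, is the entry at position `(k, k-κ)`). -/
def phi (m n : ℕ) (x : ℕ → ℕ → ℤ) : ℕ → ℕ → ℤ := fun k κ =>
  if 1 ≤ k ∧ k + 1 ≤ m ∧ κ + 1 ≤ k then x 0 (m - k + κ)
  else if m ≤ k ∧ k ≤ m + n ∧ κ + 1 ≤ m then x (k - m) κ
  else 0

lemma phi_lo (m n : ℕ) (x : ℕ → ℕ → ℤ) {k κ : ℕ} (h1 : 1 ≤ k) (h2 : k + 1 ≤ m)
    (h3 : κ + 1 ≤ k) : phi m n x k κ = x 0 (m - k + κ) := by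
  unfold phi; rw [if_pos ⟨h1, h2, h3⟩]

lemma phi_hi (m n : ℕ) (x : ℕ → ℕ → ℤ) {k κ : ℕ} (h1 : m ≤ k) (h2 : k ≤ m + n)
    (h3 : κ + 1 ≤ m) : phi m n x k κ = x (k - m) κ := by
  unfold phi; rw [if_neg (by omega), if_pos ⟨h1, h2, h3⟩]

lemma phi_zero (m n : ℕ) (x : ℕ → ℕ → ℤ) {k κ : ℕ}
    (h1 : ¬(1 ≤ k ∧ k + 1 ≤ m ∧ κ + 1 ≤ k)) (h2 : ¬(m ≤ k ∧ k ≤ m + n ∧ κ + 1 ≤ m)) :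
    phi m n x k κ = 0 := by
  unfold phi; rw [if_neg h1, if_neg h2]

lemma gt_mono {m n : ℕ} {P Q : ℕ → ℤ} {g : ℕ → ℕ → ℤ} (hg : IsGT m n P Q g)
    {i j k : ℕ} (hij : i ≤ j) (hj : j ≤ n) (hk : k < m) : g i k ≤ g j k := by
  induction j, hij using Nat.le_induction with
  | base => exact le_rfl
  | succ j hij ih => exact le_trans (ih (by omega)) (hg.2.2.1 j (by omega) k hk)

lemma Q_anti {m : ℕ} {Q : ℕ → ℤ} (hQ : ∀ r, 1 ≤ r → r < m → Q (r + 1) ≤ Q r)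
    {a b : ℕ} (ha : 1 ≤ a) (hab : a ≤ b) (hb : b ≤ m) : Q b ≤ Q a := by
  induction b, hab using Nat.le_induction with
  | base => exact le_rfl
  | succ b hab ih => exact le_trans (hQ b (by omega) (by omega)) (ih (by omega))

lemma Q_nonneg {m : ℕ} {Q : ℕ → ℤ} (hQ : ∀ r, 1 ≤ r → r < m → Q (r + 1) ≤ Q r)
    (hQm : 0 ≤ Q m) {r : ℕ} (hr : 1 ≤ r) (hrm : r ≤ m) : 0 ≤ Q r :=
  le_trans hQm (Q_anti hQ hr hrm le_rfl)

lemma phi_isGT (m n : ℕ) (P Q : ℕ → ℤ) (h : ShapeHyps m n P Q)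
    (x : ℕ → ℕ → ℤ) (hx : IsGT m n P Q x) :
    IsGT (m + n) (m + n) (fun r => if r ≤ m then P r else 0) (fun _ => 0) (phi m n x) := by
  obtain ⟨hn2, hnm, hP, hPm, hQ, hQm, hQP, -⟩ := h
  obtain ⟨hx0, hxn, hx3, hx4, hx5⟩ := id hx
  have hm2 : 2 ≤ m := le_trans hn2 hnm
  refine ⟨?_, ?_, ?_, ?_, ?_⟩
  · intro κ _
    exact phi_zero m n x (by omega) (by omega)
  · intro κ hκ
    by_cases hκm : κ + 1 ≤ m
    · rw [phi_hi m n x (by omega) le_rfl hκm]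
      have e : m + n - m = n := by omega
      rw [e, hxn κ (by omega)]
      simp [hκm]
    · rw [phi_zero m n x (by omega) (by omega)]
      simp [hκm]
  · -- column monotonicity: phi x k κ ≤ phi x (k+1) κ
    intro k hk κ _
    by_cases hkm : m ≤ k
    · by_cases hκm : κ + 1 ≤ m
      · rw [phi_hi m n x hkm (by omega) hκm, phi_hi m n x (by omega) (by omega) hκm]
        have e : k + 1 - m = (k - m) + 1 := by omega
        rw [e]
        exact hx3 (k - m) (by omega) κ (by omega)
      · rw [phi_zero m n x (by omega) (by omega), phi_zero m n x (by omega) (by omega)]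
    · by_cases hk0 : k = 0
      · subst hk0
        rw [phi_zero m n x (by omega) (by omega)]
        by_cases hκ0 : κ = 0
        · subst hκ0
          rw [phi_lo m n x le_rfl (by omega) le_rfl]
          have e : m - 1 + 0 = m - 1 := by omega
          rw [e, hx0 (m - 1) (by omega)]
          have e2 : m - 1 + 1 = m := by omega
          rw [e2]; exact hQm
        · rw [phi_zero m n x (by omega) (by omega)]
      · -- 1 ≤ k < m
        by_cases hκk : κ + 1 ≤ k
        · have hgoal1 : phi m n x k κ = x 0 (m - k + κ) := phi_lo m n x (by omega) (by omega) hκk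
          have hgoal2 : phi m n x (k + 1) κ = x 0 (m - (k + 1) + κ) := by
            by_cases hk1m : k + 1 < m
            · exact phi_lo m n x (by omega) (by omega) (by omega)
            · rw [phi_hi m n x (by omega) (by omega) (by omega)]
              congr 1 <;> omega
          rw [hgoal1, hgoal2, hx0 _ (by omega), hx0 _ (by omega)]
          have e : m - k + κ = (m - (k + 1) + κ + 1) := by omega
          rw [e]
          exact hQ _ (by omega) (by omega)
        · by_cases hκk' : κ = k
          · subst hκk'
            rw [phi_zero m n x (by omega) (by omega)]
            have hval : phi m n x (κ + 1) κ = x 0 (m - 1) := by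
              by_cases hk1m : κ + 1 < m
              · rw [phi_lo m n x (by omega) (by omega) (by omega)]
                congr 1; omega
              · rw [phi_hi m n x (by omega) (by omega) (by omega)]
                have e : κ + 1 - m = 0 := by omega
                rw [e]; congr 1; omega
            rw [hval, hx0 (m - 1) (by omega)]
            have e : m - 1 + 1 = m := by omega
            rw [e]; exact hQm
          · rw [phi_zero m n x (by omega) (by omega), phi_zero m n x (by omega) (by omega)]
  · -- diagonal: phi x (k+1) (κ+1) ≤ phi x k κ
    intro k hk κ hκ
    by_cases hkm : m ≤ k
    · by_cases hκm : κ + 2 ≤ m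
      · rw [phi_hi m n x (by omega) (by omega) hκm, phi_hi m n x hkm (by omega) (by omega)]
        have e : k + 1 - m = (k - m) + 1 := by omega
        rw [e]
        exact hx4 (k - m) (by omega) κ (by omega)
      · by_cases hκm' : κ + 1 ≤ m
        · rw [phi_zero m n x (by omega) (by omega), phi_hi m n x hkm (by omega) hκm']
          refine le_trans ?_ (gt_mono hx (Nat.zero_le _) (by omega) (by omega))
          rw [hx0 κ (by omega)]
          have e : κ + 1 = m := by omega
          rw [e]; exact hQm
        · rw [phi_zero m n x (by omega) (by omega), phi_zero m n x (by omega) (by omega)]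
    · by_cases hk0 : k = 0
      · subst hk0
        rw [phi_zero m n x (by omega) (by omega), phi_zero m n x (by omega) (by omega)]
      · by_cases hκk : κ + 1 ≤ k
        · have hval : phi m n x (k + 1) (κ + 1) = x 0 (m - k + κ) := by
            by_cases hk1m : k + 1 < m
            · rw [phi_lo m n x (by omega) (by omega) (by omega)]
              congr 1; omega
            · rw [phi_hi m n x (by omega) (by omega) (by omega)]
              have e : k + 1 - m = 0 := by omega
              rw [e]; congr 1; omega
          rw [hval, phi_lo m n x (by omega) (by omega) hκk]
        · rw [phi_zero m n x (by omega) (by omega), phi_zero m n x (by omega) (by omega)]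
  · intro k κ hkκ
    exact phi_zero m n x (by omega) (by omega)

lemma phi_inj (m n : ℕ) (P Q : ℕ → ℤ) (x y : ℕ → ℕ → ℤ)
    (hx : IsGT m n P Q x) (hy : IsGT m n P Q y) (hxy : phi m n x = phi m n y) : x = y := by
  funext i κ
  by_cases hi : i ≤ n ∧ κ < m
  · have hc := congrFun (congrFun hxy (i + m)) κ
    rw [phi_hi m n x (by omega) (by omega) (by omega),
        phi_hi m n y (by omega) (by omega) (by omega)] at hc
    have e : i + m - m = i := by omega
    rwa [e] at hc
  · rw [hx.2.2.2.2 i κ (by omega), hy.2.2.2.2 i κ (by omega)]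

lemma edge_iff (m n : ℕ) (P Q : ℕ → ℤ) (h2m : 2 ≤ m)
    (s t : ℕ → ℕ → ℤ) (hs : IsGT m n P Q s) (ht : IsGT m n P Q t)
    (i : ℕ) (hi1 : 1 ≤ i) (hin : i < n) :
    Edge m i s t ↔ Edge (m + n) (i + m) (phi m n s) (phi m n t) := by
  constructor
  · rintro ⟨κ, hκm, hst, hrest⟩
    refine ⟨κ, by omega, ?_, ?_⟩
    · rw [phi_hi m n s (by omega) (by omega) (by omega),
          phi_hi m n t (by omega) (by omega) (by omega)]
      have e : i + m - m = i := by omega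
      rw [e]; exact hst
    · intro p q hpq
      by_cases hb1 : 1 ≤ p ∧ p + 1 ≤ m ∧ q + 1 ≤ p
      · rw [phi_lo m n s hb1.1 hb1.2.1 hb1.2.2, phi_lo m n t hb1.1 hb1.2.1 hb1.2.2]
        exact hrest 0 _ (by omega)
      · by_cases hb2 : m ≤ p ∧ p ≤ m + n ∧ q + 1 ≤ m
        · rw [phi_hi m n s hb2.1 hb2.2.1 hb2.2.2, phi_hi m n t hb2.1 hb2.2.1 hb2.2.2]
          exact hrest (p - m) q (by omega)
        · rw [phi_zero m n s hb1 hb2, phi_zero m n t hb1 hb2]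
  · rintro ⟨κ, hκ, hst, hrest⟩
    have hκm : κ < m := by
      by_contra hκm
      rw [phi_zero m n s (by omega) (by omega), phi_zero m n t (by omega) (by omega)] at hst
      omega
    refine ⟨κ, hκm, ?_, ?_⟩
    · rw [phi_hi m n s (by omega) (by omega) (by omega),
          phi_hi m n t (by omega) (by omega) (by omega)] at hst
      have e : i + m - m = i := by omega
      rwa [e] at hst
    · intro p q hpq
      by_cases hp : p ≤ n ∧ q < m
      · have hc := hrest (p + m) q (by omega)
        rw [phi_hi m n s (by omega) (by omega) (by omega),
            phi_hi m n t (by omega) (by omega) (by omega)] at hc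
        have e : p + m - m = p := by omega
        rwa [e] at hc
      · rw [hs.2.2.2.2 p q (by omega), ht.2.2.2.2 p q (by omega)]

lemma range_split (M m : ℕ) (hm : m ≤ M) (f : ℕ → ℚ) :
    ∏ l ∈ Finset.range M, f l
      = (∏ l ∈ Finset.range m, f l) * ∏ l ∈ Finset.Ico m M, f l := by
  rw [Finset.range_eq_Ico, ← Finset.prod_Ico_consecutive f (Nat.zero_le m) hm,
      ← Finset.range_eq_Ico]

lemma erase_split (M m κ : ℕ) (hκ : κ < m) (hm : m ≤ M) (f : ℕ → ℚ) :
    ∏ l ∈ (Finset.range M).erase κ, f l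
      = (∏ l ∈ (Finset.range m).erase κ, f l) * ∏ l ∈ Finset.Ico m M, f l := by
  rw [← Finset.prod_union (by simp [Finset.disjoint_left]; omega)]
  congr 1
  ext l
  simp only [Finset.mem_erase, Finset.mem_range, Finset.mem_union, Finset.mem_Ico]
  omega

lemma coef_eq (m n : ℕ) (P Q : ℕ → ℤ) (h : ShapeHyps m n P Q)
    (s t : ℕ → ℕ → ℤ) (hs : IsGT m n P Q s) (ht : IsGT m n P Q t)
    (i : ℕ) (hi1 : 1 ≤ i) (hin : i < n) (κ : ℕ) (he : EdgeAt m i s t κ) :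
    Xcoef (m + n) (i + m) κ (phi m n t) = Xcoef m i κ t ∧
    Ycoef (m + n) (i + m) κ (phi m n t) = Ycoef m i κ t := by
  obtain ⟨hn2, hnm, hP, hPm, hQ, hQm, hQP, -⟩ := h
  obtain ⟨hκm, hst, hrest⟩ := he
  have hm2 : 2 ≤ m := le_trans hn2 hnm
  have hs0 : s 0 κ = Q (κ + 1) := hs.1 κ hκm
  have hQpos : 0 ≤ Q (κ + 1) := Q_nonneg hQ hQm (by omega) (by omega)
  have hmono : s 0 κ ≤ s i κ := gt_mono hs (Nat.zero_le i) (by omega) hκm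
  have htpos : 1 ≤ t i κ := by omega
  have ev0 : phi m n t (i + m) κ = t i κ := by
    rw [phi_hi m n t (by omega) (by omega) (by omega)]; congr 1; omega
  have evi : ∀ l, l < m → phi m n t (i + m) l = t i l := fun l hl => by
    rw [phi_hi m n t (by omega) (by omega) (by omega)]; congr 1; omega
  have evsucc : ∀ l, l < m → phi m n t (i + m + 1) l = t (i + 1) l := fun l hl => by
    rw [phi_hi m n t (by omega) (by omega) (by omega)]; congr 1; omega
  have evpred : ∀ l, l < m → phi m n t (i + m - 1) l = t (i - 1) l := fun l hl => by
    rw [phi_hi m n t (by omega) (by omega) (by omega)]; congr 1; omega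
  have evZi : ∀ l, m ≤ l → phi m n t (i + m) l = 0 := fun l hl =>
    phi_zero m n t (by omega) (by omega)
  have evZsucc : ∀ l, m ≤ l → phi m n t (i + m + 1) l = 0 := fun l hl =>
    phi_zero m n t (by omega) (by omega)
  have evZpred : ∀ l, m ≤ l → phi m n t (i + m - 1) l = 0 := fun l hl =>
    phi_zero m n t (by omega) (by omega)
  constructor
  · unfold Xcoef
    rw [range_split (m + n) m (by omega), erase_split (m + n) m κ hκm (by omega)]
    have hnum : ∏ l ∈ Finset.range m,
        ((phi m n t (i + m) κ - phi m n t (i + m + 1) l + l - κ - 1 : ℤ) : ℚ)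
        = ∏ l ∈ Finset.range m, ((t i κ - t (i + 1) l + l - κ - 1 : ℤ) : ℚ) :=
      Finset.prod_congr rfl fun l hl => by
        rw [ev0, evsucc l (Finset.mem_range.mp hl)]
    have hden : ∏ l ∈ (Finset.range m).erase κ,
        ((phi m n t (i + m) κ - phi m n t (i + m) l + l - κ - 1 : ℤ) : ℚ)
        = ∏ l ∈ (Finset.range m).erase κ, ((t i κ - t i l + l - κ - 1 : ℤ) : ℚ) :=
      Finset.prod_congr rfl fun l hl => by
        rw [ev0, evi l (Finset.mem_range.mp (Finset.mem_erase.mp hl).2)]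
    have hCF : ∏ l ∈ Finset.Ico m (m + n),
        ((phi m n t (i + m) κ - phi m n t (i + m + 1) l + l - κ - 1 : ℤ) : ℚ)
        = ∏ l ∈ Finset.Ico m (m + n), ((t i κ + l - κ - 1 : ℤ) : ℚ) :=
      Finset.prod_congr rfl fun l hl => by
        rw [ev0, evZsucc l (Finset.mem_Ico.mp hl).1]; congr 1; omega
    have hCG : ∏ l ∈ Finset.Ico m (m + n),
        ((phi m n t (i + m) κ - phi m n t (i + m) l + l - κ - 1 : ℤ) : ℚ)
        = ∏ l ∈ Finset.Ico m (m + n), ((t i κ + l - κ - 1 : ℤ) : ℚ) :=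
      Finset.prod_congr rfl fun l hl => by
        rw [ev0, evZi l (Finset.mem_Ico.mp hl).1]; congr 1; omega
    have hCne : (∏ l ∈ Finset.Ico m (m + n), ((t i κ + l - κ - 1 : ℤ) : ℚ)) ≠ 0 := by
      refine Finset.prod_ne_zero_iff.mpr fun l hl => ?_
      have hl' := Finset.mem_Ico.mp hl
      exact Int.cast_ne_zero.mpr (by omega)
    rw [hnum, hden, hCF, hCG, neg_div, neg_div, mul_div_mul_right _ _ hCne]
  · unfold Ycoef
    rw [range_split (m + n) m (by omega), erase_split (m + n) m κ hκm (by omega)]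
    have hnum : ∏ l ∈ Finset.range m,
        ((phi m n t (i + m) κ - phi m n t (i + m - 1) l + l - κ : ℤ) : ℚ)
        = ∏ l ∈ Finset.range m, ((t i κ - t (i - 1) l + l - κ : ℤ) : ℚ) :=
      Finset.prod_congr rfl fun l hl => by
        rw [ev0, evpred l (Finset.mem_range.mp hl)]
    have hden : ∏ l ∈ (Finset.range m).erase κ,
        ((phi m n t (i + m) κ - phi m n t (i + m) l + l - κ : ℤ) : ℚ)
        = ∏ l ∈ (Finset.range m).erase κ, ((t i κ - t i l + l - κ : ℤ) : ℚ) :=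
      Finset.prod_congr rfl fun l hl => by
        rw [ev0, evi l (Finset.mem_range.mp (Finset.mem_erase.mp hl).2)]
    have hCF : ∏ l ∈ Finset.Ico m (m + n),
        ((phi m n t (i + m) κ - phi m n t (i + m - 1) l + l - κ : ℤ) : ℚ)
        = ∏ l ∈ Finset.Ico m (m + n), ((t i κ + l - κ : ℤ) : ℚ) :=
      Finset.prod_congr rfl fun l hl => by
        rw [ev0, evZpred l (Finset.mem_Ico.mp hl).1]; congr 1; omega
    have hCG : ∏ l ∈ Finset.Ico m (m + n),
        ((phi m n t (i + m) κ - phi m n t (i + m) l + l - κ : ℤ) : ℚ)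
        = ∏ l ∈ Finset.Ico m (m + n), ((t i κ + l - κ : ℤ) : ℚ) :=
      Finset.prod_congr rfl fun l hl => by
        rw [ev0, evZi l (Finset.mem_Ico.mp hl).1]; congr 1; omega
    have hCne : (∏ l ∈ Finset.Ico m (m + n), ((t i κ + l - κ : ℤ) : ℚ)) ≠ 0 := by
      refine Finset.prod_ne_zero_iff.mpr fun l hl => ?_
      have hl' := Finset.mem_Ico.mp hl
      exact Int.cast_ne_zero.mpr (by omega)
    rw [hnum, hden, hCF, hCG, mul_div_mul_right _ _ hCne]

lemma phi_boundary (m n : ℕ) (P Q : ℕ → ℤ) (x y : ℕ → ℕ → ℤ)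
    (hx : IsGT m n P Q x) (hy : IsGT m n P Q y) (k κ : ℕ) (hk : k ≤ m ∨ k = m + n) :
    phi m n x k κ = phi m n y k κ := by
  by_cases hb1 : 1 ≤ k ∧ k + 1 ≤ m ∧ κ + 1 ≤ k
  · rw [phi_lo m n x hb1.1 hb1.2.1 hb1.2.2, phi_lo m n y hb1.1 hb1.2.1 hb1.2.2,
        hx.1 _ (by omega), hy.1 _ (by omega)]
  · by_cases hb2 : m ≤ k ∧ k ≤ m + n ∧ κ + 1 ≤ m
    · rw [phi_hi m n x hb2.1 hb2.2.1 hb2.2.2, phi_hi m n y hb2.1 hb2.2.1 hb2.2.2]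
      by_cases hkm : k = m
      · rw [show k - m = 0 from by omega, hx.1 κ (by omega), hy.1 κ (by omega)]
      · rw [show k - m = n from by omega, hx.2.1 κ (by omega), hy.2.1 κ (by omega)]
    · rw [phi_zero m n x hb1 hb2, phi_zero m n y hb1 hb2]

lemma image_eq (m n : ℕ) (P Q : ℕ → ℤ) (h : ShapeHyps m n P Q)
    (x₀ : ℕ → ℕ → ℤ) (hx₀ : IsGT m n P Q x₀) :
    phi m n '' {x : ℕ → ℕ → ℤ | IsGT m n P Q x}
      = {z : ℕ → ℕ → ℤ |
          IsGT (m + n) (m + n) (fun r => if r ≤ m then P r else 0) (fun _ => 0) z ∧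
          ∀ k κ, (k ≤ m ∨ k = m + n) → z k κ = phi m n x₀ k κ} := by
  obtain ⟨hn2, hnm, hP, hPm, hQ, hQm, hQP, -⟩ := id h
  have hm2 : 2 ≤ m := le_trans hn2 hnm
  ext z
  simp only [Set.mem_image, Set.mem_setOf_eq]
  constructor
  · rintro ⟨x, hx, rfl⟩
    exact ⟨phi_isGT m n P Q h x hx,
      fun k κ hk => phi_boundary m n P Q x x₀ hx hx₀ k κ hk⟩
  · rintro ⟨hz, hbd⟩
    set x : ℕ → ℕ → ℤ := fun i κ => if i ≤ n ∧ κ < m then z (i + m) κ else 0 with hxdef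
    have hxv : ∀ i κ, i ≤ n → κ < m → x i κ = z (i + m) κ := fun i κ h1 h2 => by
      simp only [hxdef]; rw [if_pos ⟨h1, h2⟩]
    have hxv0 : ∀ i κ, ¬(i ≤ n ∧ κ < m) → x i κ = 0 := fun i κ h1 => by
      simp only [hxdef]; rw [if_neg h1]
    have hzm : ∀ κ, κ < m → z m κ = Q (κ + 1) := fun κ hκ => by
      rw [hbd m κ (Or.inl le_rfl), phi_hi m n x₀ le_rfl (by omega) (by omega),
          show m - m = 0 from by omega, hx₀.1 κ hκ]
    have hzMn : ∀ κ, κ < m → z (m + n) κ = P (κ + 1) := fun κ hκ => by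
      rw [hbd (m + n) κ (Or.inr rfl), phi_hi m n x₀ (by omega) le_rfl (by omega),
          show m + n - m = n from by omega, hx₀.2.1 κ hκ]
    have hxGT : IsGT m n P Q x := by
      refine ⟨?_, ?_, ?_, ?_, fun i k hik => hxv0 i k (by omega)⟩
      · intro κ hκ
        rw [hxv 0 κ (by omega) hκ, Nat.zero_add, hzm κ hκ]
      · intro κ hκ
        rw [hxv n κ le_rfl hκ, show n + m = m + n from by omega, hzMn κ hκ]
      · intro i hi κ hκ
        rw [hxv i κ (by omega) hκ, hxv (i + 1) κ (by omega) hκ,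
            show i + 1 + m = i + m + 1 from by omega]
        exact hz.2.2.1 (i + m) (by omega) κ (by omega)
      · intro i hi κ hκ
        rw [hxv i κ (by omega) (by omega), hxv (i + 1) (κ + 1) (by omega) (by omega),
            show i + 1 + m = i + m + 1 from by omega]
        exact hz.2.2.2.1 (i + m) (by omega) κ (by omega)
    refine ⟨x, hxGT, ?_⟩
    funext k κ
    by_cases hb1 : 1 ≤ k ∧ k + 1 ≤ m ∧ κ + 1 ≤ k
    · rw [phi_lo m n x hb1.1 hb1.2.1 hb1.2.2, hxv 0 (m - k + κ) (by omega) (by omega),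
          Nat.zero_add, hzm _ (by omega), hbd k κ (Or.inl (by omega)),
          phi_lo m n x₀ hb1.1 hb1.2.1 hb1.2.2, hx₀.1 _ (by omega)]
    · by_cases hb2 : m ≤ k ∧ k ≤ m + n ∧ κ + 1 ≤ m
      · rw [phi_hi m n x hb2.1 hb2.2.1 hb2.2.2, hxv (k - m) κ (by omega) (by omega)]
        congr 1
        omega
      · rw [phi_zero m n x hb1 hb2]
        by_cases hκM : κ < m + n
        · by_cases hkM : k ≤ m + n
          · by_cases hkm : k ≤ m
            · rw [hbd k κ (Or.inl hkm), phi_zero m n x₀ hb1 hb2]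
            · have hκm : m ≤ κ := by omega
              have hlow : z m κ ≤ z k κ := gt_mono hz (by omega) (by omega) (by omega)
              have hup : z k κ ≤ z (m + n) κ := gt_mono hz (by omega) le_rfl (by omega)
              have h1 : z m κ = 0 := by
                rw [hbd m κ (Or.inl le_rfl), phi_zero m n x₀ (by omega) (by omega)]
              have h2 : z (m + n) κ = 0 := by
                rw [hbd (m + n) κ (Or.inr rfl), phi_zero m n x₀ (by omega) (by omega)]
              omega
          · exact (hz.2.2.2.2 k κ (by omega)).symm
        · exact (hz.2.2.2.2 k κ (by omega)).symm

/-- `φ` is an injective, edge- and color-shifting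
(`i ↦ i+m`), coefficient-preserving embedding of the skew-tabular lattice of
GT `n`-parallelograms framed by `P/Q` into the classical GT lattice of
GT `(m+n)`-parallelograms framed by `P′/Q′`, whose image is the set of
`(m+n)`-parallelograms whose columns `0,…,m` and `m+n` agree with those of
`φ(x₀)` for any GT `n`-parallelogram `x₀` framed by `P/Q`. -/
theorem phi_embedding
    (m n : ℕ) (P Q : ℕ → ℤ) (h : ShapeHyps m n P Q) :
    (∀ x, IsGT m n P Q x →
      IsGT (m + n) (m + n) (fun r => if r ≤ m then P r else 0) (fun _ => 0) (phi m n x)) ∧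
    (∀ x y, IsGT m n P Q x → IsGT m n P Q y → phi m n x = phi m n y → x = y) ∧
    (∀ s t, IsGT m n P Q s → IsGT m n P Q t → ∀ i, 1 ≤ i → i < n →
      (Edge m i s t ↔ Edge (m + n) (i + m) (phi m n s) (phi m n t))) ∧
    (∀ s t, IsGT m n P Q s → IsGT m n P Q t → ∀ i, 1 ≤ i → i < n →
      ∀ κ, EdgeAt m i s t κ →
        Xcoef (m + n) (i + m) κ (phi m n t) = Xcoef m i κ t ∧
        Ycoef (m + n) (i + m) κ (phi m n t) = Ycoef m i κ t) ∧
    (∀ x₀, IsGT m n P Q x₀ →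
      phi m n '' {x : ℕ → ℕ → ℤ | IsGT m n P Q x}
        = {z : ℕ → ℕ → ℤ |
            IsGT (m + n) (m + n) (fun r => if r ≤ m then P r else 0) (fun _ => 0) z ∧
            ∀ k κ, (k ≤ m ∨ k = m + n) → z k κ = phi m n x₀ k κ}) := by
  refine ⟨fun x hx => phi_isGT m n P Q h x hx,
    fun x y hx hy => phi_inj m n P Q x y hx hy,
    fun s t hs ht i hi1 hin => edge_iff m n P Q (le_trans h.1 h.2.1) s t hs ht i hi1 hin,
    fun s t hs ht i hi1 hin κ he => coef_eq m n P Q h s t hs ht i hi1 hin κ he,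
    fun x₀ hx₀ => image_eq m n P Q h x₀ hx₀ ⟩
end

section
/- Let s →^i t be an edge between GT n-parallelograms framed by P/Q, with g_{i,j}(s) + 1 = g_{i,j}(t). Then, writing g_{p,q} := g_{p,q}(t), every factor g_{i,j} − g_{i,k} + j − k − 1 (for k ∈ C_i, k ≠ j) and every factor g_{i,j} − g_{i,k} + j − k (for k ∈ C_i, k ≠ j) is nonzero, and the rational numbers X_{t,s} and Y_{s,t} are well defined and strictly positive. -/
set_option maxRecDepth 8000


open Finset
open scoped Classical

/-- `X_{t,s}` as a function of the pair `(s,t)`: the coefficient of the edge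
`s →^i t` when it exists, and `0` otherwise. -/
noncomputable def XE (m i : ℕ) (s t : ℕ → ℕ → ℤ) : ℚ :=
  if h : Edge m i s t then Xcoef m i h.choose t else 0

/-- `Y_{s,t}` as a function of the pair `(s,t)`. -/
noncomputable def YE (m i : ℕ) (s t : ℕ → ℕ → ℤ) : ℚ :=
  if h : Edge m i s t then Ycoef m i h.choose t else 0

lemma rowDec (m n : ℕ) (P Q : ℕ → ℤ) (hP : ∀ r, 1 ≤ r → r < m → P (r + 1) ≤ P r)
    (g : ℕ → ℕ → ℤ) (hg : IsGT m n P Q g) (i : ℕ) (hi : i ≤ n) :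
    ∀ k l : ℕ, l ≤ k → k < m → g i k ≤ g i l := by
  obtain ⟨h0, hn, h3, h4, h5⟩ := hg
  have step : ∀ k, k + 1 < m → g i (k + 1) ≤ g i k := by
    intro k hk
    rcases lt_or_eq_of_le hi with hlt | rfl
    · have a := h3 i hlt (k + 1) hk
      have b := h4 i hlt k hk
      omega
    · rw [hn (k + 1) hk, hn k (by omega)]
      exact hP (k + 1) (by omega) (by omega)
  intro k
  induction k with
  | zero =>
    intro l hl _
    have : l = 0 := by omega
    subst this; exact le_refl _
  | succ k ih =>
    intro l hl hk
    rcases Nat.eq_or_lt_of_le hl with h' | h'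
    · subst h'; exact le_refl _
    · exact le_trans (step k hk) (ih l (by omega) (by omega))

lemma prod_sign_union (S T : Finset ℕ) (hd : Disjoint S T) (f : ℕ → ℚ)
    (hS : ∀ l ∈ S, f l < 0) (hT : ∀ l ∈ T, 0 < f l) :
    ∃ q : ℚ, 0 < q ∧ ∏ l ∈ S ∪ T, f l = (-1) ^ S.card * q := by
  refine ⟨(∏ l ∈ S, -f l) * ∏ l ∈ T, f l,
    mul_pos (Finset.prod_pos fun l hl => neg_pos.mpr (hS l hl)) (Finset.prod_pos hT), ?_⟩
  rw [Finset.prod_union hd]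
  have h1 : ∏ l ∈ S, -f l = (-1) ^ S.card * ∏ l ∈ S, f l := by
    rw [← Finset.prod_const, ← Finset.prod_mul_distrib]
    exact Finset.prod_congr rfl fun x _ => by ring
  have h2 : ∏ l ∈ S, f l = (-1) ^ S.card * ∏ l ∈ S, -f l := by
    rw [h1, ← mul_assoc, ← mul_pow]; norm_num
  rw [h2]; ring

lemma div_sign_pos (c : ℕ) (a b : ℚ) (ha : 0 < a) (hb : 0 < b) :
    0 < ((-1) ^ c * a) / ((-1) ^ c * b) := by
  have hne : ((-1 : ℚ)) ^ c ≠ 0 := pow_ne_zero _ (by norm_num)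
  rw [mul_div_mul_left _ _ hne]
  exact div_pos ha hb

/-- For an edge `s →^i t` of the skew-tabular lattice, all
factors appearing in the denominators of the coefficient formulas are nonzero,
and the coefficients `X_{t,s}` and `Y_{s,t}` are strictly positive rational
numbers. -/
theorem coefficients_positive
    (m n : ℕ) (P Q : ℕ → ℤ) (h : ShapeHyps m n P Q)
    (s t : ℕ → ℕ → ℤ) (hs : IsGT m n P Q s) (ht : IsGT m n P Q t)
    (i : ℕ) (hi1 : 1 ≤ i) (hi2 : i < n)
    (κ : ℕ) (he : EdgeAt m i s t κ) :
    (∀ l < m, l ≠ κ →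
      (t i κ - t i l + (l : ℤ) - κ - 1) ≠ 0 ∧ (t i κ - t i l + (l : ℤ) - κ) ≠ 0) ∧
    0 < Xcoef m i κ t ∧ 0 < Ycoef m i κ t := by
  obtain ⟨hn2, hnm, hPdec, hP0, hQdec, hQ0, hQP, hcol⟩ := h
  obtain ⟨hκm, hstκ, heq⟩ := he
  have rowt : ∀ i' ≤ n, ∀ k l : ℕ, l ≤ k → k < m → t i' k ≤ t i' l :=
    fun i' hi' => rowDec m n P Q hPdec t ht i' hi'
  have rows : ∀ i' ≤ n, ∀ k l : ℕ, l ≤ k → k < m → s i' k ≤ s i' l :=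
    fun i' hi' => rowDec m n P Q hPdec s hs i' hi'
  obtain ⟨hs0, hsn, hs3, hs4, hs5⟩ := hs
  obtain ⟨ht0, htn, ht3, ht4, ht5⟩ := ht
  have hii : i - 1 + 1 = i := by omega
  have hA : ∀ l, l < m → l ≠ κ →
      (l < κ → t i κ - t i l + (l : ℤ) - κ - 1 ≤ -2) ∧
      (κ < l → 1 ≤ t i κ - t i l + (l : ℤ) - κ - 1) := by
    intro l hl hlκ
    constructor
    · intro hlt
      have h1 := rowt i (by omega) κ l (le_of_lt hlt) (by omega)
      omega
    · intro hκl
      rcases eq_or_lt_of_le (show κ + 1 ≤ l by omega) with hE | hGt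
      · subst hE
        have h1 : s i (κ + 1) ≤ s i κ := rows i (by omega) (κ + 1) κ (by omega) (by omega)
        have h2 : s i (κ + 1) = t i (κ + 1) := heq i (κ + 1) (by intro hc; omega)
        omega
      · have h1 := rowt i (by omega) l κ (le_of_lt hκl) hl
        omega
  have hu : ∀ l, l < m →
      (l ≤ κ → t i κ - t (i + 1) l + (l : ℤ) - κ - 1 ≤ -1) ∧
      (κ < l → 1 ≤ t i κ - t (i + 1) l + (l : ℤ) - κ - 1) := by
    intro l hl
    constructor
    · intro hlκ
      have h1 : t i κ ≤ t (i + 1) κ := ht3 i hi2 κ (by omega)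
      have h2 : t (i + 1) κ ≤ t (i + 1) l := rowt (i + 1) (by omega) κ l hlκ (by omega)
      omega
    · intro hκl
      rcases eq_or_lt_of_le (show κ + 1 ≤ l by omega) with hE | hGt
      · subst hE
        have h1 : s (i + 1) (κ + 1) ≤ s i κ := hs4 i hi2 κ (by omega)
        have h2 : s (i + 1) (κ + 1) = t (i + 1) (κ + 1) := heq (i + 1) (κ + 1) (by intro hc; omega)
        omega
      · have h1 := ht4 i hi2 (l - 1) (by omega)
        have hl1 : l - 1 + 1 = l := by omega
        rw [hl1] at h1
        have h2 := rowt i (by omega) (l - 1) κ (by omega) (by omega)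
        omega
  have hv : ∀ l, l < m →
      (l < κ → t i κ - t (i - 1) l + (l : ℤ) - κ ≤ -1) ∧
      (κ ≤ l → 1 ≤ t i κ - t (i - 1) l + (l : ℤ) - κ) := by
    intro l hl
    constructor
    · intro hlt
      have h1 := ht4 (i - 1) (by omega) l (by omega)
      rw [hii] at h1
      have h2 := rowt i (by omega) κ (l + 1) (by omega) (by omega)
      omega
    · intro hκl
      rcases Nat.eq_or_lt_of_le hκl with hE | hGt
      · subst hE
        have h1 := hs3 (i - 1) (by omega) κ (by omega)
        rw [hii] at h1
        have h2 : s (i - 1) κ = t (i - 1) κ := heq (i - 1) κ (by intro hc; omega)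
        omega
      · have h1 := ht3 (i - 1) (by omega) l hl
        rw [hii] at h1
        have h2 := rowt i (by omega) l κ (le_of_lt hGt) hl
        omega
  have hB : ∀ l, l < m → l ≠ κ →
      (l < κ → t i κ - t i l + (l : ℤ) - κ ≤ -1) ∧
      (κ < l → 1 ≤ t i κ - t i l + (l : ℤ) - κ) := by
    intro l hl hlκ
    have h1 := (hA l hl hlκ).1
    have h2 := (hA l hl hlκ).2
    refine ⟨fun h' => by have := h1 h'; omega, fun h' => by have := h2 h'; omega⟩
  have hd1 : Disjoint (Finset.range (κ + 1)) (Finset.Ico (κ + 1) m) := by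
    rw [Finset.disjoint_left]
    intro a ha hb
    simp only [Finset.mem_range] at ha
    simp only [Finset.mem_Ico] at hb
    omega
  have hd2 : Disjoint (Finset.range κ) (Finset.Ico (κ + 1) m) := by
    rw [Finset.disjoint_left]
    intro a ha hb
    simp only [Finset.mem_range] at ha
    simp only [Finset.mem_Ico] at hb
    omega
  have hd3 : Disjoint (Finset.range κ) (Finset.Ico κ m) := by
    rw [Finset.disjoint_left]
    intro a ha hb
    simp only [Finset.mem_range] at ha
    simp only [Finset.mem_Ico] at hb
    omega
  have hE1 : Finset.range m = Finset.range (κ + 1) ∪ Finset.Ico (κ + 1) m := by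
    ext a
    simp only [Finset.mem_range, Finset.mem_union, Finset.mem_Ico]
    omega
  have hE1' : Finset.range m = Finset.range κ ∪ Finset.Ico κ m := by
    ext a
    simp only [Finset.mem_range, Finset.mem_union, Finset.mem_Ico]
    omega
  have hE2 : (Finset.range m).erase κ = Finset.range κ ∪ Finset.Ico (κ + 1) m := by
    ext a
    simp only [Finset.mem_range, Finset.mem_union, Finset.mem_Ico, Finset.mem_erase]
    omega
  obtain ⟨qXN, hqXN, hXN⟩ := prod_sign_union (Finset.range (κ + 1)) (Finset.Ico (κ + 1) m) hd1
    (fun l => ((t i κ - t (i + 1) l + l - κ - 1 : ℤ) : ℚ))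
    (by
      intro l hl
      simp only [Finset.mem_range] at hl
      have hz : (t i κ - t (i + 1) l + (l : ℤ) - κ - 1 : ℤ) < 0 := by
        have := (hu l (by omega)).1 (by omega); omega
      show ((t i κ - t (i + 1) l + (l : ℤ) - κ - 1 : ℤ) : ℚ) < 0
      exact_mod_cast hz)
    (by
      intro l hl
      simp only [Finset.mem_Ico] at hl
      have hz : (0 : ℤ) < (t i κ - t (i + 1) l + (l : ℤ) - κ - 1 : ℤ) := by
        have := (hu l (by omega)).2 (by omega); omega
      show (0 : ℚ) < ((t i κ - t (i + 1) l + (l : ℤ) - κ - 1 : ℤ) : ℚ)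
      exact_mod_cast hz)
  obtain ⟨qXD, hqXD, hXD⟩ := prod_sign_union (Finset.range κ) (Finset.Ico (κ + 1) m) hd2
    (fun l => ((t i κ - t i l + l - κ - 1 : ℤ) : ℚ))
    (by
      intro l hl
      simp only [Finset.mem_range] at hl
      have hz : (t i κ - t i l + (l : ℤ) - κ - 1 : ℤ) < 0 := by
        have := (hA l (by omega) (by omega)).1 (by omega); omega
      show ((t i κ - t i l + (l : ℤ) - κ - 1 : ℤ) : ℚ) < 0
      exact_mod_cast hz)
    (by
      intro l hl
      simp only [Finset.mem_Ico] at hl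
      have hz : (0 : ℤ) < (t i κ - t i l + (l : ℤ) - κ - 1 : ℤ) := by
        have := (hA l (by omega) (by omega)).2 (by omega); omega
      show (0 : ℚ) < ((t i κ - t i l + (l : ℤ) - κ - 1 : ℤ) : ℚ)
      exact_mod_cast hz)
  obtain ⟨qYN, hqYN, hYN⟩ := prod_sign_union (Finset.range κ) (Finset.Ico κ m) hd3
    (fun l => ((t i κ - t (i - 1) l + l - κ : ℤ) : ℚ))
    (by
      intro l hl
      simp only [Finset.mem_range] at hl
      have hz : (t i κ - t (i - 1) l + (l : ℤ) - κ : ℤ) < 0 := by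
        have := (hv l (by omega)).1 (by omega); omega
      show ((t i κ - t (i - 1) l + (l : ℤ) - κ : ℤ) : ℚ) < 0
      exact_mod_cast hz)
    (by
      intro l hl
      simp only [Finset.mem_Ico] at hl
      have hz : (0 : ℤ) < (t i κ - t (i - 1) l + (l : ℤ) - κ : ℤ) := by
        have := (hv l (by omega)).2 (by omega); omega
      show (0 : ℚ) < ((t i κ - t (i - 1) l + (l : ℤ) - κ : ℤ) : ℚ)
      exact_mod_cast hz)
  obtain ⟨qYD, hqYD, hYD⟩ := prod_sign_union (Finset.range κ) (Finset.Ico (κ + 1) m) hd2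
    (fun l => ((t i κ - t i l + l - κ : ℤ) : ℚ))
    (by
      intro l hl
      simp only [Finset.mem_range] at hl
      have hz : (t i κ - t i l + (l : ℤ) - κ : ℤ) < 0 := by
        have := (hB l (by omega) (by omega)).1 (by omega); omega
      show ((t i κ - t i l + (l : ℤ) - κ : ℤ) : ℚ) < 0
      exact_mod_cast hz)
    (by
      intro l hl
      simp only [Finset.mem_Ico] at hl
      have hz : (0 : ℤ) < (t i κ - t i l + (l : ℤ) - κ : ℤ) := by
        have := (hB l (by omega) (by omega)).2 (by omega); omega
      show (0 : ℚ) < ((t i κ - t i l + (l : ℤ) - κ : ℤ) : ℚ)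
      exact_mod_cast hz)
  refine ⟨?_, ?_, ?_⟩
  · intro l hl hlκ
    have h1 := hA l hl hlκ
    have h2 := hB l hl hlκ
    constructor <;> rcases Nat.lt_or_ge l κ with h' | h'
    · have := h1.1 h'; omega
    · have := h1.2 (by omega); omega
    · have := h2.1 h'; omega
    · have := h2.2 (by omega); omega
  · unfold Xcoef
    rw [hE2, hE1, hXN, hXD]
    simp only [Finset.card_range]
    have hrw : -(((-1 : ℚ)) ^ (κ + 1) * qXN) = (-1) ^ κ * qXN := by
      rw [pow_succ]; ring
    rw [hrw]
    exact div_sign_pos κ qXN qXD hqXN hqXD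
  · unfold Ycoef
    rw [hE2, hE1', hYN, hYD]
    simp only [Finset.card_range]
    exact div_sign_pos κ qYN qYD hqYN hqYD
end

section
/- (Crossing relations.) Let t be a GT n-parallelogram framed by P/Q and let i ∈ {1,…,n−1}. Then Σ_{s : s →^i t} X_{t,s}·Y_{s,t} − Σ_{u : t →^i u} X_{u,t}·Y_{t,u} = 2·Σ_{k∈C_i} g_{i,k}(t) − Σ_{k∈C_{i+1}} g_{i+1,k}(t) − Σ_{k∈C_{i−1}} g_{i−1,k}(t), where the first sum runs over all GT n-parallelograms s framed by P/Q with s →^i t and the second sum runs over all GT n-parallelograms u framed by P/Q with t →^i u. -/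
/-
Write x_l = t_{i,l} - l, y_l = t_{i+1,l} - l and z_l = t_{i-1,l} - l, and consider
  Φ(u) = ∏_l (u - y_l) (u - z_l + 1) / ∏_l (u - x_l) (u - x_l + 1).
The product X·Y of the edge that lowers slot κ of row i is the residue of Φ at x_κ - 1, and
the product of the edge that raises slot κ is minus its residue at x_κ. An edge that leaves the
GT parallelograms has a vanishing product, so the left-hand side is the sum of all residues of Φ,
i.e. the coefficient of 1/u at infinity, 2 Σ x - Σ y - Σ z. Since x is strictly decreasing, two
poles of Φ can only meet as x_{κ+1} = x_κ - 1; interlacing then forces y_{κ+1} = x_{κ+1} and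
z_κ = x_κ, so the double pole is cancelled by two zeros and contributes nothing on either side.
-/

open Finset
open scoped Classical

section NodalResidue

open Polynomial Lagrange

variable {K ι : Type*} [Field K] [DecidableEq ι]

-- Residue of `∏ j ∈ S, (X - w j) / ∏ j ∈ S, (X - v j)` at `v p`, if that pole is simple.
def nodalResidue (S : Finset ι) (v w : ι → K) (p : ι) : K :=
  (∏ j ∈ S, (v p - w j)) / ∏ j ∈ S.erase p, (v p - v j)

theorem sum_nodalResidue_of_injOn {S : Finset ι} {v : ι → K} (w : ι → K)
    (hv : Set.InjOn v S) :
    ∑ p ∈ S, nodalResidue S v w p = ∑ p ∈ S, v p - ∑ p ∈ S, w p := by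
  rcases S.eq_empty_or_nonempty with rfl | hS
  · simp
  have hdeg : (nodal S w - nodal S v).degree < #S := by
    simpa only [degree_nodal] using degree_sub_lt_left (p := nodal S w) (q := nodal S v)
      (by rw [degree_nodal, degree_nodal]) nodal_ne_zero
      (by rw [nodal_monic.leadingCoeff, nodal_monic.leadingCoeff])
  have hcoeff (u : ι → K) : (nodal S u).coeff (#S - 1) = -∑ p ∈ S, u p := by
    rw [nodal_eq, prod_X_sub_C_coeff_card_pred _ _ hS.card_pos]
  calc ∑ p ∈ S, nodalResidue S v w p
      = (nodal S w - nodal S v).coeff (#S - 1) := by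
        rw [coeff_eq_sum hv hdeg]
        refine sum_congr rfl fun p hp => ?_
        rw [eval_sub, eval_nodal_at_node hp, sub_zero, eval_nodal, nodalResidue]
    _ = ∑ p ∈ S, v p - ∑ p ∈ S, w p := by rw [coeff_sub, hcoeff, hcoeff]; ring

theorem nodalResidue_eq_zero_of_eq {S : Finset ι} {v w : ι → K} {p : ι} (hp : p ∈ S)
    (hpw : w p = v p) : nodalResidue S v w p = 0 := by
  rw [nodalResidue, prod_eq_zero hp (by rw [hpw, sub_self]), zero_div]

theorem nodalResidue_filter_not {S : Finset ι} {v w : ι → K} {p : ι} (P : ι → Prop)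
    [DecidablePred P] (hPp : ¬ P p) (hP : ∀ j ∈ S, P j → w j = v j ∧ v j ≠ v p) :
    nodalResidue S v w p = nodalResidue (S.filter (¬ P ·)) v w p := by
  have hcancel : ∏ j ∈ S.filter P, (v p - v j) ≠ 0 :=
    prod_ne_zero_iff.mpr fun j hj => sub_ne_zero.mpr
      (hP j (mem_filter.mp hj).1 (mem_filter.mp hj).2).2.symm
  have hnum : ∏ j ∈ S.filter P, (v p - w j) = ∏ j ∈ S.filter P, (v p - v j) :=
    prod_congr rfl fun j hj => by rw [(hP j (mem_filter.mp hj).1 (mem_filter.mp hj).2).1]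
  have herase : (S.erase p).filter P = S.filter P := by
    rw [filter_erase, erase_eq_of_notMem (fun h => hPp (mem_filter.mp h).2)]
  rw [nodalResidue, nodalResidue, ← prod_filter_mul_prod_filter_not S P,
    ← prod_filter_mul_prod_filter_not (S.erase p) P, herase, filter_erase, hnum,
    mul_div_mul_left _ _ hcancel]

theorem sum_nodalResidue {S : Finset ι} {v w : ι → K}
    (h : ∀ j ∈ S, (∃ q ∈ S, q ≠ j ∧ v q = v j) → w j = v j) :
    ∑ p ∈ S, nodalResidue S v w p = ∑ p ∈ S, v p - ∑ p ∈ S, w p := by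
  set P : ι → Prop := fun j => ∃ q ∈ S, q ≠ j ∧ v q = v j
  have hsimple : Set.InjOn v (S.filter (¬ P ·)) := by
    intro a ha b hb hab
    by_contra hne
    exact (mem_filter.mp hb).2 ⟨a, (mem_filter.mp ha).1, hne, hab⟩
  have hmultiple : ∀ p ∈ S.filter P, nodalResidue S v w p = 0 := fun p hp =>
    nodalResidue_eq_zero_of_eq (mem_filter.mp hp).1
      (h p (mem_filter.mp hp).1 (mem_filter.mp hp).2)
  have hreduce : ∀ p ∈ S.filter (¬ P ·),
      nodalResidue S v w p = nodalResidue (S.filter (¬ P ·)) v w p := by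
    intro p hp
    refine nodalResidue_filter_not P (mem_filter.mp hp).2 fun j hj hPj => ⟨h j hj hPj, ?_⟩
    intro hjp
    exact (mem_filter.mp hp).2 ⟨j, hj, fun hjp' => (mem_filter.mp hp).2 (hjp' ▸ hPj), hjp⟩
  have hwv : ∑ p ∈ S.filter P, w p = ∑ p ∈ S.filter P, v p :=
    sum_congr rfl fun p hp => h p (mem_filter.mp hp).1 (mem_filter.mp hp).2
  rw [← sum_filter_add_sum_filter_not S P, sum_eq_zero hmultiple, zero_add,
    sum_congr rfl hreduce, sum_nodalResidue_of_injOn w hsimple,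
    ← sum_filter_add_sum_filter_not S P v,
    ← sum_filter_add_sum_filter_not S P w, hwv]
  ring

end NodalResidue

theorem finsum_mem_eq_sum_of_injOn {α β M : Type*} [AddCommMonoid M] {S : Set α} {f : α → M}
    (I : Finset β) (e : β → α) (he : Set.InjOn e I) (hS : S ⊆ e '' I)
    (hsupp : ∀ b ∈ I, f (e b) ≠ 0 → e b ∈ S) :
    ∑ᶠ x ∈ S, f x = ∑ b ∈ I, f (e b) := by
  rw [← sum_image he]
  refine finsum_mem_eq_sum_of_inter_support_eq f (Set.ext fun x => ?_)
  simp only [Set.mem_inter_iff, Function.mem_support, coe_image, Set.mem_image, mem_coe]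
  constructor
  · exact fun ⟨hx, hfx⟩ => ⟨hS hx, hfx⟩
  · rintro ⟨⟨b, hb, rfl⟩, hfx⟩
    exact ⟨hsupp b hb hfx, hfx⟩

theorem Finset.disjSum_erase_inl {α β : Type*} [DecidableEq α] [DecidableEq β] (s : Finset α)
    (t : Finset β) (a : α) : (s.disjSum t).erase (Sum.inl a) = (s.erase a).disjSum t := by
  ext (x | x) <;> simp

theorem Finset.disjSum_erase_inr {α β : Type*} [DecidableEq α] [DecidableEq β] (s : Finset α)
    (t : Finset β) (b : β) : (s.disjSum t).erase (Sum.inr b) = s.disjSum (t.erase b) := by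
  ext (x | x) <;> simp

def setEntry (t : ℕ → ℕ → ℤ) (i κ : ℕ) (c : ℤ) (p q : ℕ) : ℤ :=
  if p = i ∧ q = κ then c else t p q

def crossingPoles (t : ℕ → ℕ → ℤ) (i : ℕ) : ℕ ⊕ ℕ → ℚ :=
  Sum.elim (fun l => t i l - l) (fun l => t i l - l - 1)

def crossingZeros (t : ℕ → ℕ → ℤ) (i : ℕ) : ℕ ⊕ ℕ → ℚ :=
  Sum.elim (fun l => t (i + 1) l - l) (fun l => t (i - 1) l - l - 1)

section GelfandTsetlin

variable {m n : ℕ} {P Q : ℕ → ℤ} {s t u : ℕ → ℕ → ℤ} {i κ : ℕ}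

@[simp]
theorem setEntry_self (c : ℤ) : setEntry t i κ c i κ = c := by simp [setEntry]

theorem setEntry_of_ne {c : ℤ} {p q : ℕ} (h : ¬(p = i ∧ q = κ)) :
    setEntry t i κ c p q = t p q :=
  if_neg h

theorem setEntry_injective {c : ℕ → ℤ} (hc : ∀ κ, c κ ≠ t i κ) :
    Function.Injective fun κ => setEntry t i κ (c κ) := by
  intro a b hab
  by_contra hne
  have := congrFun (congrFun hab i) a
  simp only [setEntry_self, setEntry_of_ne (fun h : i = i ∧ a = b => hne h.2)] at this
  exact hc a this

theorem IsGT.le_succ_row (ht : IsGT m n P Q t) (hi : i < n) {k : ℕ} (hk : k < m) :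
    t i k ≤ t (i + 1) k :=
  ht.2.2.1 i hi k hk

theorem IsGT.succ_row_succ_le (ht : IsGT m n P Q t) (hi : i < n) {k : ℕ} (hk : k + 1 < m) :
    t (i + 1) (k + 1) ≤ t i k :=
  ht.2.2.2.1 i hi k hk

theorem IsGT.pred_row_le (ht : IsGT m n P Q t) (hi1 : 1 ≤ i) (hi2 : i ≤ n) {k : ℕ}
    (hk : k < m) : t (i - 1) k ≤ t i k := by
  simpa only [Nat.sub_add_cancel hi1] using ht.le_succ_row (i := i - 1) (by omega) hk

theorem IsGT.succ_le_pred_row (ht : IsGT m n P Q t) (hi1 : 1 ≤ i) (hi2 : i ≤ n) {k : ℕ}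
    (hk : k + 1 < m) : t i (k + 1) ≤ t (i - 1) k := by
  simpa only [Nat.sub_add_cancel hi1] using ht.succ_row_succ_le (i := i - 1) (by omega) hk

theorem isGT_setEntry (ht : IsGT m n P Q t) (hi1 : 1 ≤ i) (hi2 : i < n) (hκ : κ < m) {c : ℤ}
    (hcol₁ : t (i - 1) κ ≤ c) (hcol₂ : c ≤ t (i + 1) κ)
    (hdiag₁ : κ + 1 < m → t (i + 1) (κ + 1) ≤ c)
    (hdiag₂ : 1 ≤ κ → c ≤ t (i - 1) (κ - 1)) :
    IsGT m n P Q (setEntry t i κ c) := by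
  obtain ⟨hQ, hP, hcol, hdiag, hzero⟩ := ht
  refine ⟨fun k hk => ?_, fun k hk => ?_, fun j hj k hk => ?_, fun j hj k hk => ?_,
    fun j k hjk => ?_⟩
  · rw [setEntry_of_ne (by omega), hQ k hk]
  · rw [setEntry_of_ne (by omega), hP k hk]
  · have := hcol j hj k hk
    simp only [setEntry]
    split_ifs <;> grind
  · have := hdiag j hj k hk
    simp only [setEntry]
    split_ifs <;> grind
  · rw [setEntry_of_ne (by omega), hzero j k hjk]

theorem EdgeAt.slot_unique {κ' : ℕ} (h : EdgeAt m i s t κ) (h' : EdgeAt m i s t κ') :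
    κ = κ' := by
  by_contra hne
  have := h'.2.2 i κ (by simp [hne])
  have := h.2.1
  omega

theorem EdgeAt.XE_eq (h : EdgeAt m i s t κ) : XE m i s t = Xcoef m i κ t := by
  have hE : Edge m i s t := ⟨κ, h⟩
  rw [XE, dif_pos hE, hE.choose_spec.slot_unique h]

theorem EdgeAt.YE_eq (h : EdgeAt m i s t κ) : YE m i s t = Ycoef m i κ t := by
  have hE : Edge m i s t := ⟨κ, h⟩
  rw [YE, dif_pos hE, hE.choose_spec.slot_unique h]

theorem EdgeAt.eq_setEntry_sub (h : EdgeAt m i s t κ) : s = setEntry t i κ (t i κ - 1) := by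
  funext p q
  by_cases hpq : p = i ∧ q = κ
  · obtain ⟨rfl, rfl⟩ := hpq
    have := h.2.1
    rw [setEntry_self]
    omega
  · rw [setEntry_of_ne hpq, h.2.2 p q hpq]

theorem EdgeAt.eq_setEntry_add (h : EdgeAt m i t u κ) : u = setEntry t i κ (t i κ + 1) := by
  funext p q
  by_cases hpq : p = i ∧ q = κ
  · obtain ⟨rfl, rfl⟩ := hpq
    have := h.2.1
    rw [setEntry_self]
    omega
  · rw [setEntry_of_ne hpq, h.2.2 p q hpq]

theorem edgeAt_setEntry_sub (hκ : κ < m) : EdgeAt m i (setEntry t i κ (t i κ - 1)) t κ :=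
  ⟨hκ, by simp, fun _ _ h => setEntry_of_ne h⟩

theorem edgeAt_setEntry_add (hκ : κ < m) : EdgeAt m i t (setEntry t i κ (t i κ + 1)) κ :=
  ⟨hκ, by simp, fun _ _ h => (setEntry_of_ne h).symm⟩

theorem Xcoef_eq_zero_of_factor_eq_zero {g : ℕ → ℕ → ℤ} {l : ℕ} (hl : l < m)
    (h : g i κ - g (i + 1) l + l - κ - 1 = 0) : Xcoef m i κ g = 0 := by
  rw [Xcoef, prod_eq_zero (mem_range.mpr hl) (by rw [h, Int.cast_zero]), neg_zero, zero_div]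

theorem Ycoef_eq_zero_of_factor_eq_zero {g : ℕ → ℕ → ℤ} {l : ℕ} (hl : l < m)
    (h : g i κ - g (i - 1) l + l - κ = 0) : Ycoef m i κ g = 0 := by
  rw [Ycoef, prod_eq_zero (mem_range.mpr hl) (by rw [h, Int.cast_zero]), zero_div]

theorem isGT_setEntry_sub_of_ne_zero (ht : IsGT m n P Q t) (hi1 : 1 ≤ i) (hi2 : i < n)
    (hκ : κ < m) (hne : Xcoef m i κ t * Ycoef m i κ t ≠ 0) :
    IsGT m n P Q (setEntry t i κ (t i κ - 1)) := by
  refine isGT_setEntry ht hi1 hi2 hκ ?_ (by linarith [ht.le_succ_row hi2 hκ]) ?_ fun hκ1 => ?_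
  · refine Int.le_sub_one_of_lt
      (lt_of_le_of_ne (ht.pred_row_le hi1 hi2.le hκ) fun heq => hne ?_)
    rw [Ycoef_eq_zero_of_factor_eq_zero hκ (by rw [heq]; ring), mul_zero]
  · intro hκ1
    refine Int.le_sub_one_of_lt (lt_of_le_of_ne (ht.succ_row_succ_le hi2 hκ1) fun heq => hne ?_)
    rw [Xcoef_eq_zero_of_factor_eq_zero hκ1 (by rw [heq]; push_cast; ring), zero_mul]
  · have := ht.succ_le_pred_row hi1 hi2.le (k := κ - 1) (by omega)
    rw [Nat.sub_add_cancel hκ1] at this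
    linarith

theorem isGT_setEntry_add_of_ne_zero (ht : IsGT m n P Q t) (hi1 : 1 ≤ i) (hi2 : i < n)
    (hκ : κ < m) (hne : Xcoef m i κ (setEntry t i κ (t i κ + 1))
      * Ycoef m i κ (setEntry t i κ (t i κ + 1)) ≠ 0) :
    IsGT m n P Q (setEntry t i κ (t i κ + 1)) := by
  refine isGT_setEntry ht hi1 hi2 hκ (by linarith [ht.pred_row_le hi1 hi2.le hκ]) ?_
    (fun hκ1 => by linarith [ht.succ_row_succ_le hi2 hκ1]) fun hκ1 => ?_
  · refine Int.add_one_le_of_lt (lt_of_le_of_ne (ht.le_succ_row hi2 hκ) fun heq => hne ?_)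
    rw [Xcoef_eq_zero_of_factor_eq_zero hκ
      (by rw [setEntry_self, setEntry_of_ne (by omega), ← heq]; ring), zero_mul]
  · have := ht.succ_le_pred_row hi1 hi2.le (k := κ - 1) (by omega)
    rw [Nat.sub_add_cancel hκ1] at this
    refine Int.add_one_le_of_lt (lt_of_le_of_ne this fun heq => hne ?_)
    rw [Ycoef_eq_zero_of_factor_eq_zero (l := κ - 1) (by omega)
      (by rw [setEntry_self, setEntry_of_ne (by omega), ← heq]; push_cast [hκ1]; ring),
      mul_zero]

theorem finsum_inEdges_eq_sum (ht : IsGT m n P Q t) (hi1 : 1 ≤ i) (hi2 : i < n) :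
    ∑ᶠ s ∈ {s | IsGT m n P Q s ∧ Edge m i s t}, XE m i s t * YE m i s t
      = ∑ κ ∈ range m, Xcoef m i κ t * Ycoef m i κ t := by
  have hval : ∀ κ ∈ range m, XE m i (setEntry t i κ (t i κ - 1)) t
      * YE m i (setEntry t i κ (t i κ - 1)) t = Xcoef m i κ t * Ycoef m i κ t :=
    fun κ hκ => by
      rw [(edgeAt_setEntry_sub (mem_range.mp hκ)).XE_eq,
        (edgeAt_setEntry_sub (mem_range.mp hκ)).YE_eq]
  rw [finsum_mem_eq_sum_of_injOn (range m) (fun κ => setEntry t i κ (t i κ - 1))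
    (setEntry_injective fun κ => by omega).injOn ?_ ?_, sum_congr rfl hval]
  · rintro s ⟨-, κ, h⟩
    exact ⟨κ, mem_range.mpr h.1, h.eq_setEntry_sub.symm⟩
  · intro κ hκ hne
    rw [hval κ hκ] at hne
    exact ⟨isGT_setEntry_sub_of_ne_zero ht hi1 hi2 (mem_range.mp hκ) hne, κ,
      edgeAt_setEntry_sub (mem_range.mp hκ)⟩

theorem finsum_outEdges_eq_sum (ht : IsGT m n P Q t) (hi1 : 1 ≤ i) (hi2 : i < n) :
    ∑ᶠ u ∈ {u | IsGT m n P Q u ∧ Edge m i t u}, XE m i t u * YE m i t u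
      = ∑ κ ∈ range m, Xcoef m i κ (setEntry t i κ (t i κ + 1))
          * Ycoef m i κ (setEntry t i κ (t i κ + 1)) := by
  have hval : ∀ κ ∈ range m, XE m i t (setEntry t i κ (t i κ + 1))
      * YE m i t (setEntry t i κ (t i κ + 1)) = Xcoef m i κ (setEntry t i κ (t i κ + 1))
          * Ycoef m i κ (setEntry t i κ (t i κ + 1)) := fun κ hκ => by
    rw [(edgeAt_setEntry_add (mem_range.mp hκ)).XE_eq,
      (edgeAt_setEntry_add (mem_range.mp hκ)).YE_eq]
  rw [finsum_mem_eq_sum_of_injOn (range m) (fun κ => setEntry t i κ (t i κ + 1))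
    (setEntry_injective fun κ => by omega).injOn ?_ ?_, sum_congr rfl hval]
  · rintro u ⟨-, κ, h⟩
    exact ⟨κ, mem_range.mpr h.1, h.eq_setEntry_add.symm⟩
  · intro κ hκ hne
    rw [hval κ hκ] at hne
    exact ⟨isGT_setEntry_add_of_ne_zero ht hi1 hi2 (mem_range.mp hκ) hne, κ,
      edgeAt_setEntry_add (mem_range.mp hκ)⟩

theorem Xcoef_mul_Ycoef_eq_nodalResidue (hκ : κ < m) :
    Xcoef m i κ t * Ycoef m i κ t = nodalResidue ((range m).disjSum (range m))
      (crossingPoles t i) (crossingZeros t i) (Sum.inr κ) := by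
  set v := crossingPoles t i
  set w := crossingZeros t i
  have hXnum : ∏ l ∈ range m, ((t i κ - t (i + 1) l + l - κ - 1 : ℤ) : ℚ)
      = ∏ l ∈ range m, (v (.inr κ) - w (.inl l)) :=
    prod_congr rfl fun l _ => by simp [v, w, crossingPoles, crossingZeros]; ring
  have hXden : ∏ l ∈ (range m).erase κ, ((t i κ - t i l + l - κ - 1 : ℤ) : ℚ)
      = ∏ l ∈ (range m).erase κ, (v (.inr κ) - v (.inl l)) :=
    prod_congr rfl fun l _ => by simp [v, crossingPoles]; ring
  have hYnum : ∏ l ∈ range m, ((t i κ - t (i - 1) l + l - κ : ℤ) : ℚ)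
      = ∏ l ∈ range m, (v (.inr κ) - w (.inr l)) :=
    prod_congr rfl fun l _ => by simp [v, w, crossingPoles, crossingZeros]; ring
  have hYden : ∏ l ∈ (range m).erase κ, ((t i κ - t i l + l - κ : ℤ) : ℚ)
      = ∏ l ∈ (range m).erase κ, (v (.inr κ) - v (.inr l)) :=
    prod_congr rfl fun l _ => by simp [v, crossingPoles]; ring
  have hself : v (.inr κ) - v (.inl κ) = -1 := by simp [v, crossingPoles]
  rw [Xcoef, Ycoef, hXnum, hXden, hYnum, hYden, nodalResidue, disjSum_erase_inr, prod_disjSum,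
    prod_disjSum, ← mul_prod_erase (range m) (fun l => v (.inr κ) - v (.inl l))
      (mem_range.mpr hκ), hself]
  ring

theorem Xcoef_mul_Ycoef_setEntry_add_eq_neg_nodalResidue (hi1 : 1 ≤ i) (hκ : κ < m) :
    Xcoef m i κ (setEntry t i κ (t i κ + 1)) * Ycoef m i κ (setEntry t i κ (t i κ + 1))
      = -nodalResidue ((range m).disjSum (range m))
          (crossingPoles t i) (crossingZeros t i) (Sum.inl κ) := by
  set v := crossingPoles t i
  set w := crossingZeros t i
  set u := setEntry t i κ (t i κ + 1)
  have hup : ∀ l, u (i + 1) l = t (i + 1) l := fun l => setEntry_of_ne (by omega)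
  have hdown : ∀ l, u (i - 1) l = t (i - 1) l := fun l => setEntry_of_ne (by omega)
  have hrow : ∀ l ∈ (range m).erase κ, u i l = t i l :=
    fun l hl => setEntry_of_ne fun h => (mem_erase.mp hl).1 h.2
  have hXnum : ∏ l ∈ range m, ((u i κ - u (i + 1) l + l - κ - 1 : ℤ) : ℚ)
      = ∏ l ∈ range m, (v (.inl κ) - w (.inl l)) :=
    prod_congr rfl fun l _ => by simp [u, hup, v, w, crossingPoles, crossingZeros]; ring
  have hXden : ∏ l ∈ (range m).erase κ, ((u i κ - u i l + l - κ - 1 : ℤ) : ℚ)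
      = ∏ l ∈ (range m).erase κ, (v (.inl κ) - v (.inl l)) :=
    prod_congr rfl fun l hl => by simp [u, hrow l hl, v, crossingPoles]; ring
  have hYnum : ∏ l ∈ range m, ((u i κ - u (i - 1) l + l - κ : ℤ) : ℚ)
      = ∏ l ∈ range m, (v (.inl κ) - w (.inr l)) :=
    prod_congr rfl fun l _ => by simp [u, hdown, v, w, crossingPoles, crossingZeros]; ring
  have hYden : ∏ l ∈ (range m).erase κ, ((u i κ - u i l + l - κ : ℤ) : ℚ)
      = ∏ l ∈ (range m).erase κ, (v (.inl κ) - v (.inr l)) :=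
    prod_congr rfl fun l hl => by simp [u, hrow l hl, v, crossingPoles]; ring
  have hself : v (.inl κ) - v (.inr κ) = 1 := by simp [v, crossingPoles]
  rw [Xcoef, Ycoef, hXnum, hXden, hYnum, hYden, nodalResidue, disjSum_erase_inl, prod_disjSum,
    prod_disjSum, ← mul_prod_erase (range m) (fun l => v (.inl κ) - v (.inr l))
      (mem_range.mpr hκ), hself]
  ring

theorem IsGT.row_antitone (ht : IsGT m n P Q t) (hi1 : 1 ≤ i) (hi2 : i ≤ n) {a b : ℕ}
    (hab : a ≤ b) (hb : b < m) : t i b ≤ t i a := by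
  induction b, hab using Nat.le_induction with
  | base => exact le_rfl
  | succ b hab ih =>
    calc t i (b + 1) ≤ t (i - 1) b := ht.succ_le_pred_row hi1 hi2 hb
      _ ≤ t i b := ht.pred_row_le hi1 hi2 (by omega)
      _ ≤ t i a := ih (by omega)

theorem IsGT.eq_of_row_sub_eq (ht : IsGT m n P Q t) (hi1 : 1 ≤ i) (hi2 : i ≤ n) {a b : ℕ}
    (ha : a < m) (hb : b < m) (h : t i a - a = t i b - b) : a = b := by
  rcases le_total a b with hab | hab
  · have := ht.row_antitone hi1 hi2 hab hb; omega
  · have := ht.row_antitone hi1 hi2 hab ha; omega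

theorem IsGT.neighbors_eq_of_row_sub_eq_sub_one (ht : IsGT m n P Q t) (hi1 : 1 ≤ i)
    (hi2 : i < n) {a b : ℕ} (ha : a < m) (hb : b < m) (h : t i a - a = t i b - b - 1) :
    t (i + 1) a = t i a ∧ t (i - 1) b = t i b := by
  obtain rfl : a = b + 1 := by
    rcases lt_trichotomy a b with hab | rfl | hab
    · have := ht.row_antitone hi1 hi2.le hab.le hb; omega
    · omega
    · have := ht.row_antitone hi1 hi2.le hab.le ha; omega
  have := ht.le_succ_row hi2 ha
  have := ht.succ_row_succ_le hi2 ha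
  have := ht.pred_row_le hi1 hi2.le hb
  have := ht.succ_le_pred_row hi1 hi2.le ha
  constructor <;> push_cast at h <;> omega

theorem crossingZeros_eq_crossingPoles_of_not_simple (ht : IsGT m n P Q t) (hi1 : 1 ≤ i)
    (hi2 : i < n) : ∀ j ∈ (range m).disjSum (range m),
      (∃ q ∈ (range m).disjSum (range m),
        q ≠ j ∧ crossingPoles t i q = crossingPoles t i j) →
        crossingZeros t i j = crossingPoles t i j := by
  rintro (a | a) hj ⟨(b | b), hq, hqa, hv⟩ <;>
    simp only [inl_mem_disjSum, inr_mem_disjSum, mem_range, ne_eq, Sum.inl.injEq,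
      Sum.inr.injEq, crossingPoles, crossingZeros, Sum.elim_inl, Sum.elim_inr] at hj hq hqa hv ⊢
  · exact absurd (ht.eq_of_row_sub_eq hi1 hi2.le hq hj (by exact_mod_cast hv)) hqa
  · rw [(ht.neighbors_eq_of_row_sub_eq_sub_one hi1 hi2 hj hq (by exact_mod_cast hv.symm)).1]
  · rw [(ht.neighbors_eq_of_row_sub_eq_sub_one hi1 hi2 hq hj (by exact_mod_cast hv)).2]
  · exact absurd
      (ht.eq_of_row_sub_eq hi1 hi2.le hq hj (by exact_mod_cast sub_left_inj.mp hv)) hqa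

theorem sum_crossingPoles_sub_sum_crossingZeros :
    ∑ j ∈ (range m).disjSum (range m), crossingPoles t i j
        - ∑ j ∈ (range m).disjSum (range m), crossingZeros t i j
      = ((2 * ∑ k ∈ range m, t i k - ∑ k ∈ range m, t (i + 1) k
          - ∑ k ∈ range m, t (i - 1) k : ℤ) : ℚ) := by
  simp only [sum_disjSum, crossingPoles, crossingZeros, Sum.elim_inl, Sum.elim_inr,
    sum_sub_distrib, sum_const, card_range]
  push_cast
  ring

end GelfandTsetlin

theorem crossing_relations_general
    (m n : ℕ) (P Q : ℕ → ℤ)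
    (t : ℕ → ℕ → ℤ) (ht : IsGT m n P Q t)
    (i : ℕ) (hi1 : 1 ≤ i) (hi2 : i < n) :
    (∑ᶠ s ∈ {s : ℕ → ℕ → ℤ | IsGT m n P Q s ∧ Edge m i s t}, XE m i s t * YE m i s t)
      - (∑ᶠ u ∈ {u : ℕ → ℕ → ℤ | IsGT m n P Q u ∧ Edge m i t u}, XE m i t u * YE m i t u)
    = ((2 * (∑ k ∈ Finset.range m, t i k)
        - (∑ k ∈ Finset.range m, t (i + 1) k)
        - (∑ k ∈ Finset.range m, t (i - 1) k) : ℤ) : ℚ) := by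
  rw [finsum_inEdges_eq_sum ht hi1 hi2, finsum_outEdges_eq_sum ht hi1 hi2,
    sum_congr rfl fun κ hκ => Xcoef_mul_Ycoef_eq_nodalResidue (mem_range.mp hκ),
    sum_congr rfl fun κ hκ =>
      Xcoef_mul_Ycoef_setEntry_add_eq_neg_nodalResidue hi1 (mem_range.mp hκ),
    sum_neg_distrib, sub_neg_eq_add, add_comm, ← sum_disjSum,
    sum_nodalResidue (crossingZeros_eq_crossingPoles_of_not_simple ht hi1 hi2),
    sum_crossingPoles_sub_sum_crossingZeros]

/-- crossing relations.  For any GT `n`-parallelogram `t`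
framed by `P/Q` and any color `i`, the difference between the sum of the
products `X_{t,s}·Y_{s,t}` over edges `s →^i t` and the sum of the products
`X_{u,t}·Y_{t,u}` over edges `t →^i u` equals
`2·Σ_{k∈C_i} g_{i,k}(t) − Σ_{k∈C_{i+1}} g_{i+1,k}(t) − Σ_{k∈C_{i−1}} g_{i−1,k}(t)`. -/
theorem crossing_relations
    (m n : ℕ) (P Q : ℕ → ℤ) (h : ShapeHyps m n P Q)
    (t : ℕ → ℕ → ℤ) (ht : IsGT m n P Q t)
    (i : ℕ) (hi1 : 1 ≤ i) (hi2 : i < n) :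
    (∑ᶠ s ∈ {s : ℕ → ℕ → ℤ | IsGT m n P Q s ∧ Edge m i s t}, XE m i s t * YE m i s t)
      - (∑ᶠ u ∈ {u : ℕ → ℕ → ℤ | IsGT m n P Q u ∧ Edge m i t u}, XE m i t u * YE m i t u)
    = ((2 * (∑ k ∈ Finset.range m, t i k)
        - (∑ k ∈ Finset.range m, t (i + 1) k)
        - (∑ k ∈ Finset.range m, t (i - 1) k) : ℤ) : ℚ) :=
  crossing_relations_general m n P Q t ht i hi1 hi2
end
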